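/- arXiv:2501.05573 — 11 statements merged into one kernel-verified Lean document; each statement's English description precedes it below -/
import Mathlib

section
/- Let R be an integral domain and p ∈ R a nonzero element. Then the quotient ring R[x,y]/(xy - p) is an integral domain. -/
open MvPolynomial

section Stmt2Aux
open LaurentPolynomial
set_option linter.unusedSectionVars false

variable {R : Type*} [CommRing R] [IsDomain R]

noncomputable def Φ (p : R) : MvPolynomial (Fin 2) R →ₐ[R] LaurentPolynomial R :=
  aeval ![T 1, LaurentPolynomial.C p * T (-1)]

lemma Φ_X0 (p : R) : Φ p (X 0) = T 1 := by simp [Φ]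
lemma Φ_X1 (p : R) : Φ p (X 1) = LaurentPolynomial.C p * T (-1) := by simp [Φ]

lemma Φ_w (p : R) : Φ p (X 0 * X 1 - MvPolynomial.C p) = 0 := by
  have : Φ p (MvPolynomial.C p) = LaurentPolynomial.C p := by
    rw [Φ, aeval_C, LaurentPolynomial.C_eq_algebraMap]
  rw [map_sub, map_mul, Φ_X0, Φ_X1, this, mul_comm (T 1), mul_assoc, ← T_add]
  simp

lemma Φ_smul_X0_pow (p : R) (r : R) (i : ℕ) :
    Φ p (r • X 0 ^ i) = AddMonoidAlgebra.single (i : ℤ) r := by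
  rw [map_smul, map_pow, Φ_X0, T_pow, single_eq_C_mul_T,
    Algebra.smul_def, ← LaurentPolynomial.C_eq_algebraMap]
  norm_num

lemma Φ_smul_X1_pow (p : R) (r : R) (j : ℕ) :
    Φ p (r • X 1 ^ (j+1)) = AddMonoidAlgebra.single (-(j+1) : ℤ) (r * p ^ (j+1)) := by
  rw [map_smul, map_pow, Φ_X1, mul_pow, ← map_pow, T_pow, single_eq_C_mul_T,
    Algebra.smul_def, ← LaurentPolynomial.C_eq_algebraMap, ← mul_assoc, ← map_mul]
  norm_num

noncomputable def Ssub (p : R) : Submodule R (MvPolynomial (Fin 2) R) :=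
  (Ideal.span {(X 0 * X 1 - MvPolynomial.C p : MvPolynomial (Fin 2) R)}).restrictScalars R ⊔
    Submodule.span R (Set.range fun i : ℕ => (X 0 : MvPolynomial (Fin 2) R) ^ i) ⊔
    Submodule.span R (Set.range fun j : ℕ => (X 1 : MvPolynomial (Fin 2) R) ^ (j + 1))

lemma mem_S_I (p : R) {f : MvPolynomial (Fin 2) R}
    (hf : f ∈ Ideal.span {(X 0 * X 1 - MvPolynomial.C p : MvPolynomial (Fin 2) R)}) :
    f ∈ Ssub p :=
  Submodule.mem_sup_left (Submodule.mem_sup_left hf)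

lemma mem_S_A (p : R) (i : ℕ) : (X 0 : MvPolynomial (Fin 2) R) ^ i ∈ Ssub p :=
  Submodule.mem_sup_left (Submodule.mem_sup_right (Submodule.subset_span ⟨i, rfl⟩))

lemma mem_S_B (p : R) (j : ℕ) : (X 1 : MvPolynomial (Fin 2) R) ^ (j + 1) ∈ Ssub p :=
  Submodule.mem_sup_right (Submodule.subset_span ⟨j, rfl⟩)

lemma X0_pow_mul_X1_mem (p : R) (n : ℕ) :
    (X 0 : MvPolynomial (Fin 2) R) ^ n * X 1 ∈ Ssub p := by
  cases n with
  | zero => simpa using mem_S_B p 0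
  | succ k =>
    have key : (X 0 : MvPolynomial (Fin 2) R) ^ (k + 1) * X 1 =
        X 0 ^ k * (X 0 * X 1 - MvPolynomial.C p) + p • X 0 ^ k := by
      rw [MvPolynomial.smul_eq_C_mul]; ring
    rw [key]
    exact (Ssub p).add_mem
      (mem_S_I p (Ideal.mul_mem_left _ _ (Ideal.subset_span rfl)))
      ((Ssub p).smul_mem p (mem_S_A p k))

lemma X1_pow_mul_X0_mem (p : R) (j : ℕ) :
    (X 1 : MvPolynomial (Fin 2) R) ^ (j + 1) * X 0 ∈ Ssub p := by
  have key : (X 1 : MvPolynomial (Fin 2) R) ^ (j + 1) * X 0 =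
      X 1 ^ j * (X 0 * X 1 - MvPolynomial.C p) + p • X 1 ^ j := by
    rw [MvPolynomial.smul_eq_C_mul]; ring
  rw [key]
  refine (Ssub p).add_mem (mem_S_I p (Ideal.mul_mem_left _ _ (Ideal.subset_span rfl))) ?_
  refine (Ssub p).smul_mem p ?_
  cases j with
  | zero => simpa using mem_S_A p 0
  | succ k => exact mem_S_B p k

lemma mul_X_mem (p : R) {f : MvPolynomial (Fin 2) R} (hf : f ∈ Ssub p) (n : Fin 2) :
    f * X n ∈ Ssub p := by
  rcases Submodule.mem_sup.1 hf with ⟨g, hg, b, hb, rfl⟩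
  rcases Submodule.mem_sup.1 hg with ⟨u, hu, a, ha, rfl⟩
  rw [add_mul, add_mul]
  refine (Ssub p).add_mem ((Ssub p).add_mem (mem_S_I p (Ideal.mul_mem_right _ _ hu)) ?_) ?_
  · refine Submodule.span_induction (p := fun a _ => a * X n ∈ Ssub p) ?_ ?_ ?_ ?_ ha
    · rintro _ ⟨i, rfl⟩
      fin_cases n
      · simpa [pow_succ] using mem_S_A p (i + 1)
      · exact X0_pow_mul_X1_mem p i
    · simp
    · intro x y _ _ hx hy; rw [add_mul]; exact (Ssub p).add_mem hx hy
    · intro r x _ hx; rw [smul_mul_assoc]; exact (Ssub p).smul_mem r hx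
  · refine Submodule.span_induction (p := fun b _ => b * X n ∈ Ssub p) ?_ ?_ ?_ ?_ hb
    · rintro _ ⟨j, rfl⟩
      fin_cases n
      · exact X1_pow_mul_X0_mem p j
      · simpa [pow_succ] using mem_S_B p (j + 1)
    · simp
    · intro x y _ _ hx hy; rw [add_mul]; exact (Ssub p).add_mem hx hy
    · intro r x _ hx; rw [smul_mul_assoc]; exact (Ssub p).smul_mem r hx

lemma all_mem_S (p : R) (f : MvPolynomial (Fin 2) R) : f ∈ Ssub p := by
  induction f using MvPolynomial.induction_on with
  | C a => simpa [MvPolynomial.smul_eq_C_mul] using (Ssub p).smul_mem a (mem_S_A p 0)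
  | add f g hf hg => exact (Ssub p).add_mem hf hg
  | mul_X f n hf => exact mul_X_mem p hf n

lemma extraction (p : R) (hp : p ≠ 0) (c d : ℕ →₀ R)
    (hz : (c.sum fun i r => AddMonoidAlgebra.single (i:ℤ) r)
        + (d.sum fun j r => AddMonoidAlgebra.single (-(j+1:ℤ)) (r * p ^ (j+1)))
        = (0 : LaurentPolynomial R)) : c = 0 ∧ d = 0 := by
  constructor
  · ext i
    have h := congrArg (fun F : LaurentPolynomial R => F.coeff (i:ℤ)) hz
    simp only [AddMonoidAlgebra.coeff_add, AddMonoidAlgebra.coeff_finsuppSum,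
      AddMonoidAlgebra.coeff_single, AddMonoidAlgebra.coeff_zero,
      Finsupp.add_apply, Finsupp.sum_apply, Finsupp.single_apply,
      Finsupp.coe_zero, Pi.zero_apply] at h
    rw [Finsupp.sum, Finset.sum_eq_single i
        (fun i' _ hne => if_neg (by exact_mod_cast hne))
        (fun hni => by simp [Finsupp.notMem_support_iff.1 hni]),
      Finsupp.sum, Finset.sum_eq_zero (fun j _ => if_neg (by omega))] at h
    simpa using h
  · ext j
    have h := congrArg (fun F : LaurentPolynomial R => F.coeff (-(j+1:ℤ))) hz
    simp only [AddMonoidAlgebra.coeff_add, AddMonoidAlgebra.coeff_finsuppSum,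
      AddMonoidAlgebra.coeff_single, AddMonoidAlgebra.coeff_zero,
      Finsupp.add_apply, Finsupp.sum_apply, Finsupp.single_apply,
      Finsupp.coe_zero, Pi.zero_apply] at h
    rw [Finsupp.sum, Finset.sum_eq_zero (fun i _ => if_neg (by omega)),
      Finsupp.sum, Finset.sum_eq_single j
        (fun j' _ hne => if_neg (fun hcon => hne (by omega)))
        (fun hnj => by simp [Finsupp.notMem_support_iff.1 hnj]),
      zero_add, if_pos rfl] at h
    rcases mul_eq_zero.1 h with h' | h'
    · simpa using h'
    · exact absurd h' (pow_ne_zero _ hp)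

lemma ker_le (p : R) (hp : p ≠ 0) {f : MvPolynomial (Fin 2) R} (hf : Φ p f = 0) :
    f ∈ Ideal.span {(X 0 * X 1 - MvPolynomial.C p : MvPolynomial (Fin 2) R)} := by
  rcases Submodule.mem_sup.1 (all_mem_S p f) with ⟨g, hg, b, hb, rfl⟩
  rcases Submodule.mem_sup.1 hg with ⟨u, hu, a, ha, rfl⟩
  rcases Finsupp.mem_span_range_iff_exists_finsupp.1 ha with ⟨c, rfl⟩
  rcases Finsupp.mem_span_range_iff_exists_finsupp.1 hb with ⟨d, rfl⟩
  have hu' : u ∈ Ideal.span {(X 0 * X 1 - MvPolynomial.C p : MvPolynomial (Fin 2) R)} := hu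
  have hu0 : Φ p u = 0 := by
    rcases Ideal.mem_span_singleton'.1 hu' with ⟨g, rfl⟩
    rw [map_mul, Φ_w, mul_zero]
  have hΦc : Φ p (c.sum fun i r => r • X 0 ^ i)
      = c.sum fun i r => AddMonoidAlgebra.single (i:ℤ) r := by
    rw [map_finsuppSum]; exact Finsupp.sum_congr fun i _ => Φ_smul_X0_pow p _ i
  have hΦd : Φ p (d.sum fun j r => r • X 1 ^ (j+1))
      = d.sum fun j r => AddMonoidAlgebra.single (-(j+1:ℤ)) (r * p ^ (j+1)) := by
    rw [map_finsuppSum]; exact Finsupp.sum_congr fun j _ => Φ_smul_X1_pow p _ j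
  rw [map_add, map_add, hu0, zero_add, hΦc, hΦd] at hf
  obtain ⟨hc, hd⟩ := extraction p hp c d hf
  simpa [hc, hd] using hu'

theorem stmt2' (p : R) (hp : p ≠ 0) :
    IsDomain (MvPolynomial (Fin 2) R ⧸
      Ideal.span {(X 0 * X 1 - MvPolynomial.C p : MvPolynomial (Fin 2) R)}) := by
  have hker : RingHom.ker (Φ p).toRingHom
      = Ideal.span {(X 0 * X 1 - MvPolynomial.C p : MvPolynomial (Fin 2) R)} := by
    apply le_antisymm
    · intro f hf
      exact ker_le p hp (by exact hf)
    · rw [Ideal.span_le]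
      intro w hw
      rcases hw with rfl
      exact Φ_w p
  haveI : IsDomain (LaurentPolynomial R) := NoZeroDivisors.to_isDomain _
  rw [Ideal.Quotient.isDomain_iff_prime, ← hker]
  exact RingHom.ker_isPrime _

end Stmt2Aux

/-- If `R` is a domain and `p ≠ 0`, then `R[x,y]/(xy - p)` is a domain. -/
theorem stmt2 (R : Type*) [CommRing R] [IsDomain R] (p : R) (hp : p ≠ 0) :
    IsDomain (MvPolynomial (Fin 2) R ⧸
      Ideal.span {(X 0 * X 1 - C p : MvPolynomial (Fin 2) R)}) := by
  exact stmt2' p hp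
end

section
/- Let R be an integral domain and p ∈ R nonzero. Every element of R[x,y]/(xy - p) is uniquely represented by an R-linear combination of 1, positive powers of x, and positive powers of y; in particular, the natural map R → R[x,y]/(xy - p) is injective. -/
open MvPolynomial

noncomputable section Stmt3Aux

variable {R : Type*} [CommRing R] [IsDomain R] (p : R)

/-- The algebra hom `R[x,y] → R[ℤ]` sending `x ↦ T`, `y ↦ p T⁻¹`. -/
def stmt3φ : MvPolynomial (Fin 2) R →ₐ[R] AddMonoidAlgebra R ℤ :=
  aeval ![AddMonoidAlgebra.single (1 : ℤ) (1 : R), AddMonoidAlgebra.single (-1 : ℤ) p]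

omit [IsDomain R] in
lemma stmt3φ_rel : stmt3φ p ((X 0 * X 1 - C p : MvPolynomial (Fin 2) R)) = 0 := by
  simp [stmt3φ, AddMonoidAlgebra.single_mul_single, algebraMap_eq,
    AddMonoidAlgebra.coe_algebraMap]

/-- The induced algebra hom on the quotient. -/
def stmt3ψ : (MvPolynomial (Fin 2) R ⧸
    Ideal.span {(X 0 * X 1 - C p : MvPolynomial (Fin 2) R)}) →ₐ[R] AddMonoidAlgebra R ℤ :=
  Ideal.Quotient.liftₐ _ (stmt3φ p) (by
    intro a ha
    have hle : Ideal.span {(X 0 * X 1 - C p : MvPolynomial (Fin 2) R)}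
        ≤ RingHom.ker (stmt3φ p).toRingHom := by
      rw [Ideal.span_le]
      rintro b rfl
      simpa [RingHom.mem_ker] using stmt3φ_rel p
    exact hle ha)

omit [IsDomain R] in
lemma stmt3ψ_mk (q : MvPolynomial (Fin 2) R) :
    stmt3ψ p (Ideal.Quotient.mk _ q) = stmt3φ p q := rfl

/-- coefficients -/
def stmt3c (z : ℤ) : R := if 0 ≤ z then (1 : R) else p ^ (-z).toNat

omit [IsDomain R] in
lemma stmt3ψ_f (z : ℤ) :
    stmt3ψ p (if 0 ≤ z then
        (Ideal.Quotient.mk (Ideal.span {(X 0 * X 1 - C p : MvPolynomial (Fin 2) R)}))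
          (X 0 ^ z.toNat)
      else
        (Ideal.Quotient.mk (Ideal.span {(X 0 * X 1 - C p : MvPolynomial (Fin 2) R)}))
          (X 1 ^ (-z).toNat)) = AddMonoidAlgebra.single z (stmt3c p z) := by
  by_cases hz : 0 ≤ z
  · rw [if_pos hz, stmt3ψ_mk, map_pow,
      show stmt3φ p (X 0) = AddMonoidAlgebra.single (1 : ℤ) (1 : R) by simp [stmt3φ],
      AddMonoidAlgebra.single_pow, one_pow]
    simp only [stmt3c, if_pos hz, nsmul_eq_mul, mul_one]
    congr 1
    omega
  · rw [if_neg hz, stmt3ψ_mk, map_pow,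
      show stmt3φ p (X 1) = AddMonoidAlgebra.single (-1 : ℤ) p by simp [stmt3φ],
      AddMonoidAlgebra.single_pow]
    simp only [stmt3c, if_neg hz, nsmul_eq_mul, mul_neg, mul_one]
    congr 1
    omega

lemma stmt3_li_single (hp : p ≠ 0) :
    LinearIndependent R (fun z : ℤ => (AddMonoidAlgebra.single z (stmt3c p z) : AddMonoidAlgebra R ℤ)) := by
  rw [linearIndependent_iff']
  intro s g hg i hi
  have h := DFunLike.congr_fun (congrArg AddMonoidAlgebra.coeff hg) i
  simp only [AddMonoidAlgebra.coeff_sum, AddMonoidAlgebra.coeff_smul, AddMonoidAlgebra.coeff_single, Finsupp.finset_sum_apply, Finsupp.smul_apply, Finsupp.single_apply,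
    smul_eq_mul, mul_ite, mul_zero, Finset.sum_ite_eq', hi, if_pos, Finsupp.coe_zero,
    Pi.zero_apply, AddMonoidAlgebra.coeff_zero] at h
  have hc : stmt3c p i ≠ 0 := by
    unfold stmt3c
    split
    · exact one_ne_zero
    · exact pow_ne_zero _ hp
  exact (mul_eq_zero.mp h).resolve_right hc

end Stmt3Aux

set_option maxHeartbeats 1000000 in
/-- Elements of `R[x,y]/(xy - p)` are uniquely `R`-linear combinations of `1`,
positive powers of `x`, and positive powers of `y` (i.e. the family indexed by `ℤ` sending
`n ≥ 0` to `x^n` and `n < 0` to `y^(-n)` is an `R`-basis); in particular `R` embeds. -/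
theorem stmt3 (R : Type*) [CommRing R] [IsDomain R] (p : R) (hp : p ≠ 0) :
    LinearIndependent R (fun z : ℤ =>
      if 0 ≤ z then
        (Ideal.Quotient.mk (Ideal.span {(X 0 * X 1 - C p : MvPolynomial (Fin 2) R)}))
          (X 0 ^ z.toNat)
      else
        (Ideal.Quotient.mk (Ideal.span {(X 0 * X 1 - C p : MvPolynomial (Fin 2) R)}))
          (X 1 ^ (-z).toNat)) ∧
    Submodule.span R (Set.range (fun z : ℤ =>
      if 0 ≤ z then
        (Ideal.Quotient.mk (Ideal.span {(X 0 * X 1 - C p : MvPolynomial (Fin 2) R)}))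
          (X 0 ^ z.toNat)
      else
        (Ideal.Quotient.mk (Ideal.span {(X 0 * X 1 - C p : MvPolynomial (Fin 2) R)}))
          (X 1 ^ (-z).toNat))) = ⊤ ∧
    Function.Injective (algebraMap R (MvPolynomial (Fin 2) R ⧸
      Ideal.span {(X 0 * X 1 - C p : MvPolynomial (Fin 2) R)})) := by
  set I : Ideal (MvPolynomial (Fin 2) R) :=
    Ideal.span {(X 0 * X 1 - C p : MvPolynomial (Fin 2) R)} with hI
  set f : ℤ → MvPolynomial (Fin 2) R ⧸ I := fun z : ℤ =>
      if 0 ≤ z then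
        (Ideal.Quotient.mk I) (X 0 ^ z.toNat)
      else
        (Ideal.Quotient.mk I) (X 1 ^ (-z).toNat) with hf
  have hψf : ∀ z, stmt3ψ p (f z) = AddMonoidAlgebra.single z (stmt3c p z) := fun z => stmt3ψ_f p z
  refine ⟨?_, ?_, ?_⟩
  · -- linear independence
    apply LinearIndependent.of_comp (stmt3ψ p).toLinearMap
    have : ((stmt3ψ p).toLinearMap ∘ f) =
        fun z : ℤ => (AddMonoidAlgebra.single z (stmt3c p z) : AddMonoidAlgebra R ℤ) := by
      funext z; exact hψf z
    rw [this]
    exact stmt3_li_single p hp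
  · -- spanning
    set S := Submodule.span R (Set.range f) with hS
    have hfS : ∀ z, f z ∈ S := fun z => Submodule.subset_span ⟨z, rfl⟩
    have smul_mk : ∀ (r : R) (q : MvPolynomial (Fin 2) R),
        (Ideal.Quotient.mk I) (C r * q) = r • (Ideal.Quotient.mk I) q := by
      intro r q
      rw [← smul_eq_C_mul, ← Ideal.Quotient.mkₐ_eq_mk R, map_smul]
    have hrel : (Ideal.Quotient.mk I) (X 0 * X 1 : MvPolynomial (Fin 2) R)
        = (Ideal.Quotient.mk I) (C p) := by
      rw [Ideal.Quotient.eq]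
      exact Ideal.subset_span rfl
    have key0 : ∀ z : ℤ, f z * (Ideal.Quotient.mk I) (X 0) ∈ S := by
      intro z
      by_cases hz : 0 ≤ z
      · have : f z * (Ideal.Quotient.mk I) (X 0) = f (z + 1) := by
          simp only [hf, if_pos hz, if_pos (by omega : (0:ℤ) ≤ z + 1), ← map_mul, ← pow_succ]
          congr 2
          omega
        rw [this]; exact hfS _
      · have h1 : f z * (Ideal.Quotient.mk I) (X 0)
            = p • (Ideal.Quotient.mk I) (X 1 ^ (-(z+1)).toNat) := by
          simp only [hf, if_neg hz]
          rw [show (-z).toNat = (-(z+1)).toNat + 1 by omega, ← map_mul,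
            show (X 1 ^ ((-(z+1)).toNat + 1) * X 0 : MvPolynomial (Fin 2) R)
              = (X 0 * X 1) * X 1 ^ (-(z+1)).toNat by ring,
            map_mul, hrel, ← map_mul, smul_mk]
        rw [h1]
        refine Submodule.smul_mem _ _ ?_
        by_cases hz1 : 0 ≤ z + 1
        · have hz1' : z + 1 = 0 := by omega
          have : ((Ideal.Quotient.mk I) (X 1 ^ (-(z+1)).toNat)) = f 0 := by
            simp only [hf, if_pos le_rfl, hz1']
            norm_num
          rw [this]; exact hfS 0
        · have : ((Ideal.Quotient.mk I) (X 1 ^ (-(z+1)).toNat)) = f (z+1) := by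
            simp only [hf, if_neg hz1]
          rw [this]; exact hfS _
    have key1 : ∀ z : ℤ, f z * (Ideal.Quotient.mk I) (X 1) ∈ S := by
      intro z
      by_cases hz : 0 < z
      · have h1 : f z * (Ideal.Quotient.mk I) (X 1)
            = p • (Ideal.Quotient.mk I) (X 0 ^ (z-1).toNat) := by
          simp only [hf, if_pos (le_of_lt hz)]
          rw [show z.toNat = (z-1).toNat + 1 by omega, ← map_mul,
            show (X 0 ^ ((z-1).toNat + 1) * X 1 : MvPolynomial (Fin 2) R)
              = (X 0 * X 1) * X 0 ^ (z-1).toNat by ring,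
            map_mul, hrel, ← map_mul, smul_mk]
        rw [h1]
        refine Submodule.smul_mem _ _ ?_
        have : ((Ideal.Quotient.mk I) (X 0 ^ (z-1).toNat)) = f (z-1) := by
          simp only [hf, if_pos (by omega : (0:ℤ) ≤ z - 1)]
        rw [this]; exact hfS _
      · have : f z * (Ideal.Quotient.mk I) (X 1) = f (z - 1) := by
          by_cases hz0 : 0 ≤ z
          · have hz' : z = 0 := by omega
            subst hz'
            simp only [hf, if_pos le_rfl, if_neg (by omega : ¬ (0:ℤ) ≤ (0:ℤ) - 1), ← map_mul]
            norm_num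
          · simp only [hf, if_neg hz0, if_neg (by omega : ¬ (0:ℤ) ≤ z - 1), ← map_mul,
              ← pow_succ]
            congr 2
            omega
        rw [this]; exact hfS _
    rw [Submodule.eq_top_iff']
    intro q
    obtain ⟨q, rfl⟩ := Ideal.Quotient.mk_surjective (I := I) q
    induction q using MvPolynomial.induction_on with
    | C a =>
      have h1 := smul_mk a 1
      rw [mul_one] at h1
      rw [h1]
      refine Submodule.smul_mem _ _ ?_
      have : ((Ideal.Quotient.mk I) (1 : MvPolynomial (Fin 2) R)) = f 0 := by
        simp only [hf, if_pos le_rfl]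
        norm_num
      rw [this]; exact hfS 0
    | add q r hq hr =>
      rw [map_add]; exact Submodule.add_mem _ hq hr
    | mul_X q n hq =>
      rw [map_mul]
      have hmap : Submodule.map (LinearMap.mulRight R ((Ideal.Quotient.mk I) (X n))) S ≤ S := by
        rw [hS, Submodule.map_span, Submodule.span_le]
        rintro _ ⟨_, ⟨z, rfl⟩, rfl⟩
        simp only [LinearMap.mulRight_apply]
        fin_cases n
        · exact key0 z
        · exact key1 z
      exact hmap ⟨_, hq, rfl⟩
  · -- injectivity
    intro a b hab
    have h := congrArg (stmt3ψ p) hab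
    rw [AlgHom.commutes, AlgHom.commutes] at h
    have h2 : (AddMonoidAlgebra.single (0:ℤ) a : AddMonoidAlgebra R ℤ) = AddMonoidAlgebra.single 0 b := by
      simpa [AddMonoidAlgebra.coe_algebraMap, algebraMap_eq] using h
    exact AddMonoidAlgebra.single_right_inj.mp h2
end

section
/- Let R be a UFD, p a prime element of R, and R' := R[x,y]/(xy - p), with s and s' the images of x and y in R'. Then s is a prime element of R', s' is a prime element of R', and s and s' are not associates in R'. -/
open MvPolynomial

noncomputable section StmtFourAux

variable {R : Type*} [CommRing R]

def stmt4psi (R : Type*) [CommRing R] (i : Fin 2) :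
    MvPolynomial (Fin 2) R →+* MvPolynomial (Fin 2) R :=
  eval₂Hom C (fun k => if k = i then 0 else X k)

def stmt4phi (R : Type*) [CommRing R] (i : Fin 2) :
    MvPolynomial (Fin 2) R →+* Polynomial R :=
  eval₂Hom Polynomial.C (fun k => if k = i then 0 else Polynomial.X)

lemma stmt4_fin2 (i k : Fin 2) (h : ¬ k = i) : k = i + 1 := by
  revert h; fin_cases i <;> fin_cases k <;> decide

lemma stmt4_sub_psi_mem (i : Fin 2) (f : MvPolynomial (Fin 2) R) :
    f - stmt4psi R i f ∈ Ideal.span {(X i : MvPolynomial (Fin 2) R)} := by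
  induction f using MvPolynomial.induction_on with
  | C a => simp [stmt4psi]
  | add f g hf hg =>
      have := add_mem hf hg
      rwa [sub_add_sub_comm, ← map_add] at this
  | mul_X f k hf =>
      rw [map_mul]
      have hX : stmt4psi R i (X k) = if k = i then 0 else X k := by
        simp [stmt4psi]
      by_cases hk : k = i
      · subst hk
        rw [hX, if_pos rfl, mul_zero, sub_zero]
        exact Ideal.mul_mem_left _ f (Ideal.subset_span rfl)
      · rw [hX, if_neg hk, ← sub_mul]
        exact Ideal.mul_mem_right _ _ hf

lemma stmt4_ker_phi2 (i : Fin 2) :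
    RingHom.ker (stmt4phi R i) = Ideal.span {(X i : MvPolynomial (Fin 2) R)} := by
  apply le_antisymm
  · intro f hf
    have hcomp : (stmt4phi R i).comp (stmt4psi R i) = stmt4phi R i := by
      apply MvPolynomial.ringHom_ext
      · intro a; simp [stmt4phi, stmt4psi]
      · intro k
        by_cases hk : k = i <;> simp [stmt4phi, stmt4psi, hk]
    have htau : (Polynomial.eval₂RingHom (C : R →+* MvPolynomial (Fin 2) R)
          (X (i + 1))).comp ((stmt4phi R i).comp (stmt4psi R i)) = stmt4psi R i := by
      apply MvPolynomial.ringHom_ext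
      · intro a; simp [stmt4phi, stmt4psi]
      · intro k
        by_cases hk : k = i
        · simp [stmt4phi, stmt4psi, hk]
        · have hk1 := stmt4_fin2 i k hk
          simp [stmt4phi, stmt4psi, hk, hk1]
    have h2 : stmt4phi R i (stmt4psi R i f) = 0 := by
      rw [← RingHom.comp_apply, hcomp]; exact hf
    have h3 : stmt4psi R i f = 0 := by
      have := congrArg (fun g : MvPolynomial (Fin 2) R →+* MvPolynomial (Fin 2) R => g f) htau
      simp only [RingHom.comp_apply] at this
      rw [← this, h2, map_zero]
    have := stmt4_sub_psi_mem i f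
    rwa [h3, sub_zero] at this
  · rw [Ideal.span_le, Set.singleton_subset_iff]
    simp [RingHom.mem_ker, stmt4phi]

/-- The full map `R[x,y] → (R/p)[t]` killing `X i` and `p`. -/
def stmt4Phi (R : Type*) [CommRing R] (p : R) (i : Fin 2) :
    MvPolynomial (Fin 2) R →+* Polynomial (R ⧸ Ideal.span {p}) :=
  (stmt4phi (R ⧸ Ideal.span {p}) i).comp
    (MvPolynomial.map (Ideal.Quotient.mk (Ideal.span {p})))

lemma stmt4_ker_Phi (p : R) (i : Fin 2) :
    RingHom.ker (stmt4Phi R p i) =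
      Ideal.span {(X i : MvPolynomial (Fin 2) R), C p} := by
  rw [stmt4Phi, ← RingHom.comap_ker, stmt4_ker_phi2]
  have h1 : (Ideal.span {(X i : MvPolynomial (Fin 2) (R ⧸ Ideal.span {p}))}) =
      Ideal.map (MvPolynomial.map (Ideal.Quotient.mk (Ideal.span {p})))
        (Ideal.span {(X i : MvPolynomial (Fin 2) R)}) := by
    rw [Ideal.map_span, Set.image_singleton, MvPolynomial.map_X]
  rw [h1, Ideal.comap_map_of_surjective
      (MvPolynomial.map (Ideal.Quotient.mk (Ideal.span {p})) :
        MvPolynomial (Fin 2) R →+* MvPolynomial (Fin 2) (R ⧸ Ideal.span {p}))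
      (MvPolynomial.map_surjective _ Ideal.Quotient.mk_surjective)]
  have h2 : Ideal.comap
      (MvPolynomial.map (Ideal.Quotient.mk (Ideal.span {p})) :
        MvPolynomial (Fin 2) R →+* MvPolynomial (Fin 2) (R ⧸ Ideal.span {p})) ⊥ =
      Ideal.span {(C p : MvPolynomial (Fin 2) R)} := by
    have h3 : Ideal.comap
        (MvPolynomial.map (Ideal.Quotient.mk (Ideal.span {p})) :
          MvPolynomial (Fin 2) R →+* MvPolynomial (Fin 2) (R ⧸ Ideal.span {p})) ⊥ =
        RingHom.ker (MvPolynomial.map (Ideal.Quotient.mk (Ideal.span {p})) :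
          MvPolynomial (Fin 2) R →+* MvPolynomial (Fin 2) (R ⧸ Ideal.span {p})) := rfl
    rw [h3, MvPolynomial.ker_map, Ideal.mk_ker, Ideal.map_span, Set.image_singleton]
  rw [h2, Ideal.span_insert]

lemma stmt4_J_isPrime (p : R) (hp : Prime p) (i : Fin 2) :
    (Ideal.span {(X i : MvPolynomial (Fin 2) R), C p}).IsPrime := by
  haveI : (Ideal.span {p}).IsPrime := (Ideal.span_singleton_prime hp.ne_zero).mpr hp
  rw [← stmt4_ker_Phi]
  exact RingHom.ker_isPrime _

end StmtFourAux

/-- If `R` is a UFD and `p` is prime, then in `R' = R[x,y]/(xy - p)` the images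
`s`, `s'` of `x`, `y` are prime and not associated. -/
theorem stmt4 (R : Type*) [CommRing R] [IsDomain R] [UniqueFactorizationMonoid R]
    (p : R) (hp : Prime p) :
    Prime ((Ideal.Quotient.mk (Ideal.span {(X 0 * X 1 - C p : MvPolynomial (Fin 2) R)}))
        (X 0)) ∧
    Prime ((Ideal.Quotient.mk (Ideal.span {(X 0 * X 1 - C p : MvPolynomial (Fin 2) R)}))
        (X 1)) ∧
    ¬ Associated
        ((Ideal.Quotient.mk (Ideal.span {(X 0 * X 1 - C p : MvPolynomial (Fin 2) R)})) (X 0))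
        ((Ideal.Quotient.mk (Ideal.span {(X 0 * X 1 - C p : MvPolynomial (Fin 2) R)})) (X 1)) := by
  haveI hps : (Ideal.span {p}).IsPrime := (Ideal.span_singleton_prime hp.ne_zero).mpr hp
  set I : Ideal (MvPolynomial (Fin 2) R) := Ideal.span {X 0 * X 1 - C p} with hI
  set mkI := Ideal.Quotient.mk I with hmkI
  have h01 : ∀ i : Fin 2, i = 0 ∨ i = 1 := by decide
  have hker : RingHom.ker mkI = I := Ideal.mk_ker
  have hgen : ∀ i : Fin 2, (X 0 * X 1 - C p : MvPolynomial (Fin 2) R) ∈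
      Ideal.span {X i, C p} := by
    intro i
    rcases h01 i with rfl | rfl
    · exact Ideal.mem_span_pair.mpr ⟨X 1, -1, by ring⟩
    · exact Ideal.mem_span_pair.mpr ⟨X 0, -1, by ring⟩
  have hIle : ∀ i : Fin 2, I ≤ Ideal.span {X i, C p} := by
    intro i
    rw [hI, Ideal.span_le, Set.singleton_subset_iff]
    exact hgen i
  -- values of the maps
  have hval : ∀ i j : Fin 2, i ≠ j →
      stmt4Phi R p j (X i) = Polynomial.X := by
    intro i j hij
    simp [stmt4Phi, stmt4phi, hij]
  have hXne : (Polynomial.X : Polynomial (R ⧸ Ideal.span {p})) ≠ 0 := Polynomial.X_ne_zero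
  -- nonvanishing of the images of the variables
  have hne : ∀ i : Fin 2, mkI (X i) ≠ 0 := by
    intro i h
    have h1 : (X i : MvPolynomial (Fin 2) R) ∈ I := (Ideal.Quotient.eq_zero_iff_mem).mp h
    have h2 : (X i : MvPolynomial (Fin 2) R) ∈ Ideal.span {X (i + 1), C p} := hIle (i + 1) h1
    rw [← stmt4_ker_Phi p (i + 1)] at h2
    have h3 : stmt4Phi R p (i + 1) (X i) = 0 := h2
    rw [hval i (i + 1) (by rcases h01 i with rfl | rfl <;> decide)] at h3
    exact hXne h3
  -- mk (C p) is a multiple of each variable image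
  have hcp : ∀ i : Fin 2, mkI (C p) ∈ Ideal.span {mkI (X i)} := by
    intro i
    have hxy : mkI (X 0 * X 1) = mkI (C p) := by
      rw [Ideal.Quotient.mk_eq_mk_iff_sub_mem]
      exact Ideal.subset_span rfl
    rw [Ideal.mem_span_singleton]
    rcases h01 i with rfl | rfl
    · exact ⟨mkI (X 1), by rw [← map_mul, hxy]⟩
    · exact ⟨mkI (X 0), by rw [← map_mul, mul_comm, hxy]⟩
  have hmap : ∀ i : Fin 2, Ideal.map mkI (Ideal.span {X i, C p}) =
      Ideal.span {mkI (X i)} := by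
    intro i
    rw [Ideal.map_span, Set.image_pair, Set.pair_comm, Ideal.span_insert,
      sup_eq_right.mpr ((Ideal.span_singleton_le_iff_mem _).mpr (hcp i))]
  have hprime : ∀ i : Fin 2, Prime (mkI (X i)) := by
    intro i
    haveI := stmt4_J_isPrime p hp i
    have := Ideal.map_isPrime_of_surjective
      (f := mkI) Ideal.Quotient.mk_surjective (I := Ideal.span {X i, C p})
      (by rw [hker]; exact hIle i)
    rw [hmap i] at this
    exact (Ideal.span_singleton_prime (hne i)).mp this
  refine ⟨hprime 0, hprime 1, ?_⟩
  intro hassoc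
  have hdvd : mkI (X 0) ∣ mkI (X 1) := hassoc.dvd
  have h1 : mkI (X 1) ∈ Ideal.span {mkI (X 0)} := Ideal.mem_span_singleton.mpr hdvd
  rw [← hmap 0] at h1
  have h2 : (X 1 : MvPolynomial (Fin 2) R) ∈
      Ideal.comap mkI (Ideal.map mkI (Ideal.span {X 0, C p})) := h1
  rw [Ideal.comap_map_of_surjective mkI Ideal.Quotient.mk_surjective] at h2
  have h3 : Ideal.comap mkI ⊥ = I := hker
  rw [h3, sup_eq_left.mpr (hIle 0)] at h2
  rw [← stmt4_ker_Phi p 0] at h2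
  have h4 : stmt4Phi R p 0 (X 1) = 0 := h2
  rw [hval 1 0 (by decide)] at h4
  exact hXne h4
end

section
/- Let R be a UFD, p a prime element of R, and R' := R[x,y]/(xy - p). Then the unit group of R' equals the unit group of R, i.e., every unit of R' lies in (the image of) R and is a unit there. -/
set_option synthInstance.maxHeartbeats 400000
set_option maxHeartbeats 800000

open MvPolynomial
open scoped LaurentPolynomial

namespace Stmt6Aux

noncomputable section

variable {R : Type*} [CommRing R] [IsDomain R]

/-- Units of Laurent polynomials over a domain are `C c * T n` with `c` a unit. -/
lemma laurent_unit {F G : R[T;T⁻¹]} (h : F * G = 1) :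
    ∃ (n : ℤ) (c : R), IsUnit c ∧ F = LaurentPolynomial.C c * LaurentPolynomial.T n := by
  obtain ⟨n, f', hf⟩ := F.exists_T_pow
  obtain ⟨m, g', hg⟩ := G.exists_T_pow
  have key : f' * g' = Polynomial.X ^ (n + m) := by
    apply Polynomial.toLaurent_injective
    rw [map_mul, hf, hg, Polynomial.toLaurent_X_pow, mul_mul_mul_comm, h, one_mul,
      ← LaurentPolynomial.T_add]
    push_cast
    ring_nf
  have hdvd : f' ∣ Polynomial.X ^ (n + m) := ⟨g', key.symm⟩
  obtain ⟨i, hi, hassoc⟩ := (dvd_prime_pow Polynomial.prime_X _).mp hdvd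
  obtain ⟨v, hv⟩ := hassoc.symm
  obtain ⟨c, hc, hcv⟩ := Polynomial.isUnit_iff.mp v.isUnit
  refine ⟨(i : ℤ) - n, c, hc, ?_⟩
  have h1 : Polynomial.toLaurent f' = LaurentPolynomial.C c * LaurentPolynomial.T i := by
    rw [← hv, ← hcv, map_mul, Polynomial.toLaurent_X_pow, Polynomial.toLaurent_C, mul_comm]
  have hF : F = Polynomial.toLaurent f' * LaurentPolynomial.T (-n) := by
    rw [hf, mul_assoc, ← LaurentPolynomial.T_add]
    simp
  rw [hF, h1, mul_assoc, ← LaurentPolynomial.T_add, sub_eq_add_neg]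

variable (p : R)

/-- The map `R[x,y] → R[T,T⁻¹]`, `x ↦ T`, `y ↦ p T⁻¹`. -/
def φ : MvPolynomial (Fin 2) R →ₐ[R] R[T;T⁻¹] :=
  MvPolynomial.aeval ![LaurentPolynomial.T 1, LaurentPolynomial.C p * LaurentPolynomial.T (-1)]

/-- Reinterpret a Laurent polynomial as a `Finsupp` (additively). -/
def tofs : R[T;T⁻¹] →+ (ℤ →₀ R) where
  toFun F := F.coeff
  map_zero' := rfl
  map_add' _ _ := rfl

omit [IsDomain R] in
lemma tofs_single (n : ℤ) (r : R) :
    tofs (AddMonoidAlgebra.single n r : R[T;T⁻¹]) = Finsupp.single n r := rfl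

lemma φ_monomial (m : Fin 2 →₀ ℕ) (c : R) :
    φ p (monomial m c) =
      (AddMonoidAlgebra.single ((m 0 : ℤ) - (m 1 : ℤ)) (c * p ^ (m 1)) : R[T;T⁻¹]) := by
  rw [φ, aeval_monomial, Finsupp.prod_fintype _ _ (fun i => pow_zero _), Fin.prod_univ_two]
  simp only [Matrix.cons_val_zero, Matrix.cons_val_one, Matrix.head_cons]
  rw [mul_pow, LaurentPolynomial.T_pow, LaurentPolynomial.T_pow, ← map_pow,
    LaurentPolynomial.single_eq_C_mul_T, map_mul]
  rw [← LaurentPolynomial.C_eq_algebraMap, mul_one,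
    show ((m 1 : ℤ)) * -1 = -(m 1 : ℤ) from by ring, sub_eq_add_neg,
    LaurentPolynomial.T_add]
  ring

/-- A polynomial is in "good normal form" if each monomial is a pure power of `x` or of `y`. -/
def Good (g : MvPolynomial (Fin 2) R) : Prop := ∀ m ∈ g.support, m 0 = 0 ∨ m 1 = 0

/-- The good exponent vector with `x`-degree minus `y`-degree equal to `n`. -/
def mn (n : ℤ) : Fin 2 →₀ ℕ := Finsupp.single 0 n.toNat + Finsupp.single 1 (-n).toNat

lemma mn_zero (n : ℤ) : mn n 0 = n.toNat := by
  simp [mn, Finsupp.single_apply, show ((1:Fin 2) ≠ 0) from by decide]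

lemma mn_one (n : ℤ) : mn n 1 = (-n).toNat := by
  simp [mn, Finsupp.single_apply, show ((0:Fin 2) ≠ 1) from by decide]

lemma good_eq_mn {m : Fin 2 →₀ ℕ} (hm : m 0 = 0 ∨ m 1 = 0) {n : ℤ}
    (h : (m 0 : ℤ) - (m 1 : ℤ) = n) : m = mn n := by
  ext i
  fin_cases i
  · show m 0 = mn n 0; rw [mn_zero]; omega
  · show m 1 = mn n 1; rw [mn_one]; omega

lemma exists_good (f : MvPolynomial (Fin 2) R) :
    ∃ g, Good g ∧
      Ideal.Quotient.mk (Ideal.span {(X 0 * X 1 - C p : MvPolynomial (Fin 2) R)}) g =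
      Ideal.Quotient.mk (Ideal.span {(X 0 * X 1 - C p : MvPolynomial (Fin 2) R)}) f := by
  induction f using MvPolynomial.induction_on' with
  | monomial m c =>
    set k := min (m 0) (m 1) with hk
    set m' : Fin 2 →₀ ℕ := Finsupp.single 0 (m 0 - k) + Finsupp.single 1 (m 1 - k) with hm'
    have hm'0 : m' 0 = m 0 - k := by
      simp [hm', Finsupp.single_apply, show ((1:Fin 2) ≠ 0) from by decide]
    have hm'1 : m' 1 = m 1 - k := by
      simp [hm', Finsupp.single_apply, show ((0:Fin 2) ≠ 1) from by decide]
    refine ⟨monomial m' (c * p ^ k), ?_, ?_⟩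
    · intro t ht
      have ht' : t = m' := Finset.mem_singleton.mp (MvPolynomial.support_monomial_subset ht)
      subst ht'
      rw [hm'0, hm'1]
      omega
    · have hsum : m' + (Finsupp.single 0 k + Finsupp.single 1 k) = m := by
        rw [hm']
        ext i
        fin_cases i <;>
          · simp [Finsupp.single_apply, show ((1:Fin 2) ≠ 0) from by decide,
              show ((0:Fin 2) ≠ 1) from by decide]
            omega
      have e1 : ((X 0 * X 1 : MvPolynomial (Fin 2) R))^k
          = monomial (Finsupp.single 0 k + Finsupp.single 1 k) 1 := by
        rw [mul_pow, X_pow_eq_monomial, X_pow_eq_monomial, monomial_mul, one_mul]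
      have e2 : monomial m c = monomial m' c * ((X 0 * X 1 : MvPolynomial (Fin 2) R))^k := by
        rw [e1, monomial_mul, mul_one, hsum]
      have e4 : monomial m' c * C (p ^ k) = monomial m' (c * p ^ k) := by
        rw [mul_comm, C_mul_monomial, mul_comm]
      apply Ideal.Quotient.eq.mpr
      rw [Ideal.mem_span_singleton]
      have e5 : monomial m' (c * p ^ k) - monomial m c
          = monomial m' c * ((C p)^k - (X 0 * X 1)^k) := by
        rw [e2, ← e4, ← C_pow]
        ring
      rw [e5]
      exact (dvd_sub_comm.mp (sub_dvd_pow_sub_pow (X 0 * X 1) (C p) k)).mul_left _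
  | add f g hf hg =>
    obtain ⟨f', hf', ef⟩ := hf
    obtain ⟨g', hg', eg⟩ := hg
    refine ⟨f' + g', ?_, by
      rw [map_add (Ideal.Quotient.mk _), ef, eg, map_add (Ideal.Quotient.mk _)]⟩
    intro t ht
    rcases Finset.mem_union.mp (MvPolynomial.support_add ht) with h | h
    · exact hf' t h
    · exact hg' t h

lemma fact (hp0 : p ≠ 0) {g : MvPolynomial (Fin 2) R} (hg : Good g) {n : ℤ} {u : R}
    (hu : u ≠ 0) (h : φ p g = (AddMonoidAlgebra.single n u : R[T;T⁻¹])) :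
    g = monomial (mn n) (coeff (mn n) g) ∧ u = coeff (mn n) g * p ^ ((-n).toNat) := by
  have expand : tofs (φ p g) =
      ∑ m ∈ g.support, Finsupp.single ((m 0 : ℤ) - (m 1 : ℤ)) (coeff m g * p ^ (m 1)) := by
    conv_lhs => rw [g.as_sum, map_sum, map_sum]
    exact Finset.sum_congr rfl fun m _ => by rw [φ_monomial, tofs_single]
  have hsupp : ∀ m ∈ g.support, m = mn n := by
    intro m hm
    have hdm : ((m 0 : ℤ) - (m 1 : ℤ)) = n := by
      by_contra hne
      have hz : tofs (φ p g) ((m 0 : ℤ) - (m 1 : ℤ)) = 0 := by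
        rw [h, tofs_single, Finsupp.single_apply, if_neg (fun hh => hne hh.symm)]
      rw [expand, Finsupp.finset_sum_apply, Finset.sum_eq_single m] at hz
      · rw [Finsupp.single_apply, if_pos rfl] at hz
        exact mul_ne_zero (mem_support_iff.mp hm) (pow_ne_zero _ hp0) hz
      · intro b hb hbm
        rw [Finsupp.single_apply, if_neg]
        intro heq
        exact hbm (by rw [good_eq_mn (hg b hb) heq, ← good_eq_mn (hg m hm) rfl])
      · intro hmm
        exact absurd hm hmm
    exact good_eq_mn (hg m hm) hdm
  have hg' : g = monomial (mn n) (coeff (mn n) g) := by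
    rcases Finset.subset_singleton_iff.mp
        (fun m hm => Finset.mem_singleton.mpr (hsupp m hm)) with he | he
    · rw [MvPolynomial.support_eq_empty.mp he]
      simp [MvPolynomial.support_eq_empty.mp he]
    · conv_lhs => rw [g.as_sum, he, Finset.sum_singleton]
  refine ⟨hg', ?_⟩
  have h2 : φ p g =
      (AddMonoidAlgebra.single ((mn n 0 : ℤ) - (mn n 1 : ℤ)) (coeff (mn n) g * p ^ (mn n 1)) :
        R[T;T⁻¹]) := by
    conv_lhs => rw [hg']
    exact φ_monomial p _ _
  have hd : ((mn n 0 : ℤ) - (mn n 1 : ℤ)) = n := by rw [mn_zero, mn_one]; omega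
  rw [h, hd] at h2
  have h3 := Finsupp.single_injective n (congrArg tofs h2 :)
  rw [mn_one] at h3
  exact h3

end

end Stmt6Aux

/-- If `R` is a UFD and `p` prime, then the units of `R' = R[x,y]/(xy - p)` are
exactly (the images of) the units of `R`. -/
theorem stmt6 (R : Type*) [CommRing R] [IsDomain R] [UniqueFactorizationMonoid R]
    (p : R) (hp : Prime p) :
    ∀ a : MvPolynomial (Fin 2) R ⧸
        Ideal.span {(X 0 * X 1 - C p : MvPolynomial (Fin 2) R)},
      IsUnit a ↔ ∃ r : R, IsUnit r ∧
        (Ideal.Quotient.mk (Ideal.span {(X 0 * X 1 - C p : MvPolynomial (Fin 2) R)})) (C r)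
          = a := by
  intro a
  constructor
  · intro ha
    obtain ⟨b, hab⟩ := ha.exists_right_inv
    obtain ⟨f₀, hf₀⟩ := Ideal.Quotient.mk_surjective a
    obtain ⟨g₀, hg₀⟩ := Ideal.Quotient.mk_surjective b
    obtain ⟨f, hfG, hf⟩ := Stmt6Aux.exists_good p f₀
    obtain ⟨g, hgG, hg⟩ := Stmt6Aux.exists_good p g₀
    have hmul : Ideal.Quotient.mk (Ideal.span {(X 0 * X 1 - C p : MvPolynomial (Fin 2) R)})
        (f * g) = 1 := by
      rw [map_mul, hf, hg, hf₀, hg₀, hab]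
    have hmem : f * g - 1 ∈ Ideal.span {(X 0 * X 1 - C p : MvPolynomial (Fin 2) R)} := by
      rw [← Ideal.Quotient.eq, map_one]
      exact hmul
    obtain ⟨q, hq⟩ := Ideal.mem_span_singleton'.mp hmem
    have hker : Stmt6Aux.φ p (X 0 * X 1 - C p : MvPolynomial (Fin 2) R) = 0 := by
      have ex1 : (X 0 * X 1 : MvPolynomial (Fin 2) R)
          = monomial (Finsupp.single 0 1 + Finsupp.single 1 1) 1 := by
        rw [show (X 0 : MvPolynomial (Fin 2) R) = monomial (Finsupp.single 0 1) 1 from rfl,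
          show (X 1 : MvPolynomial (Fin 2) R) = monomial (Finsupp.single 1 1) 1 from rfl,
          monomial_mul, one_mul]
      have ex2 : (C p : MvPolynomial (Fin 2) R) = monomial 0 p := rfl
      rw [ex1, ex2, map_sub, Stmt6Aux.φ_monomial, Stmt6Aux.φ_monomial]
      have v0 : ((Finsupp.single 0 1 + Finsupp.single 1 1 : Fin 2 →₀ ℕ)) 0 = 1 := by
        simp [Finsupp.single_apply, show ((1:Fin 2) ≠ 0) from by decide]
      have v1 : ((Finsupp.single 0 1 + Finsupp.single 1 1 : Fin 2 →₀ ℕ)) 1 = 1 := by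
        simp [Finsupp.single_apply, show ((0:Fin 2) ≠ 1) from by decide]
      rw [v0, v1]
      simp
    have hFG : Stmt6Aux.φ p f * Stmt6Aux.φ p g = 1 := by
      have h0 := congrArg (Stmt6Aux.φ p) hq
      rw [map_mul, hker, mul_zero, map_sub, map_mul, map_one] at h0
      exact sub_eq_zero.mp h0.symm
    obtain ⟨n, c, hc, hFeq⟩ := Stmt6Aux.laurent_unit hFG
    obtain ⟨n', c', hc', hGeq⟩ :=
      Stmt6Aux.laurent_unit (by rw [mul_comm] at hFG; exact hFG)
    have hsing : (AddMonoidAlgebra.single (n + n') (c * c') : LaurentPolynomial R)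
        = AddMonoidAlgebra.single (0 : ℤ) (1 : R) := by
      have h1 := hFG
      rw [hFeq, hGeq] at h1
      rw [LaurentPolynomial.single_eq_C_mul_T, LaurentPolynomial.single_eq_C_mul_T,
        map_mul, map_one, LaurentPolynomial.T_add, LaurentPolynomial.T_zero, mul_one, ← h1]
      ring
    rcases (Finsupp.single_eq_single_iff _ _ _ _).mp (congrArg Stmt6Aux.tofs hsing :) with ⟨h2, h3⟩ | ⟨h2, h3⟩
    swap
    · exact absurd h3.symm zero_ne_one
    have hn' : n' = -n := by omega
    have hf1 : Stmt6Aux.φ p f = (AddMonoidAlgebra.single n c : LaurentPolynomial R) := by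
      rw [hFeq, LaurentPolynomial.single_eq_C_mul_T]
    have hg1 : Stmt6Aux.φ p g = (AddMonoidAlgebra.single (-n) c' : LaurentPolynomial R) := by
      rw [hGeq, hn', LaurentPolynomial.single_eq_C_mul_T]
    obtain ⟨hfm, hfu⟩ := Stmt6Aux.fact p hp.ne_zero hfG hc.ne_zero hf1
    obtain ⟨hgm, hgu⟩ := Stmt6Aux.fact p hp.ne_zero hgG hc'.ne_zero hg1
    rcases lt_trichotomy n 0 with hn | hn | hn
    · exfalso
      apply hp.not_unit
      apply isUnit_of_dvd_unit ?_ hc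
      rw [hfu]
      exact Dvd.dvd.mul_left (dvd_pow_self p (by omega : (-n).toNat ≠ 0)) _
    · subst hn
      refine ⟨coeff (Stmt6Aux.mn 0) f, ?_, ?_⟩
      · have hcc : c = coeff (Stmt6Aux.mn 0) f := by simpa using hfu
        exact hcc ▸ hc
      · have hmn0 : Stmt6Aux.mn (0:ℤ) = 0 := by simp [Stmt6Aux.mn]
        have hcf : (C (coeff (Stmt6Aux.mn 0) f) : MvPolynomial (Fin 2) R) = f := by
          conv_rhs => rw [hfm, hmn0]
          rw [monomial_zero', hmn0]
        rw [hcf, hf, hf₀]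
    · exfalso
      apply hp.not_unit
      apply isUnit_of_dvd_unit ?_ hc'
      rw [hgu]
      exact Dvd.dvd.mul_left (dvd_pow_self p (by omega : (- -n).toNat ≠ 0)) _
  · rintro ⟨r, hr, hra⟩
    rw [← hra]
    exact (hr.map MvPolynomial.C).map (Ideal.Quotient.mk _)
end

section
/- Let R be a UFD and p a prime element of R. Then the ring R' := R[x,y]/(xy - p) is a UFD. -/
section Nagata
variable {A B : Type*} [CommRing A] [IsDomain A] [CommRing B] [IsDomain B]

/-- Descent: if `t^n * b = a * c` and `t` is prime not dividing `a`, then `a ∣ b`. -/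
lemma descent_aux {t : A} (ht : Prime t) {a : A} (hta : ¬ t ∣ a) :
    ∀ (n : ℕ) (b c : A), t ^ n * b = a * c → a ∣ b := by
  intro n
  induction n with
  | zero => intro b c h; exact ⟨c, by simpa using h⟩
  | succ n ih =>
    intro b c h
    have htc : t ∣ c := by
      rcases ht.2.2 a c ⟨t ^ n * b, by rw [← h]; ring⟩ with h' | h'
      · exact absurd h' hta
      · exact h'
    obtain ⟨c', rfl⟩ := htc
    refine ih b c' (mul_left_cancel₀ ht.ne_zero ?_)
    rw [← mul_assoc, mul_comm t (t ^ n), ← pow_succ, h]; ring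

lemma prime_of_map {φ : A →+* B} (hinj : Function.Injective φ) {t : A} (ht : Prime t)
    (hsurj : ∀ b : B, ∃ (n : ℕ) (a : A), φ t ^ n * b = φ a)
    {a : A} (hta : ¬ t ∣ a) (hpa : Prime (φ a)) : Prime a := by
  refine ⟨fun h => hpa.ne_zero (by simp [h]), fun h => hpa.not_unit (h.map φ), ?_⟩
  intro b c ⟨d, hd⟩
  have : φ a ∣ φ b * φ c := ⟨φ d, by rw [← map_mul, ← map_mul, hd]⟩
  rcases hpa.2.2 _ _ this with h' | h'
  · obtain ⟨β, hβ⟩ := h'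
    obtain ⟨n, e, he⟩ := hsurj β
    have : t ^ n * b = a * e := by
      apply hinj
      simp only [map_mul, map_pow, hβ, ← he]; ring
    exact Or.inl (descent_aux ht hta n b e this)
  · obtain ⟨β, hβ⟩ := h'
    obtain ⟨n, e, he⟩ := hsurj β
    have : t ^ n * c = a * e := by
      apply hinj
      simp only [map_mul, map_pow, hβ, ← he]; ring
    exact Or.inr (descent_aux ht hta n c e this)

/-- Strip off powers of `t`. -/
lemma strip {t : A} (ht : Prime t)
    (hbd : ∀ a : A, a ≠ 0 → ∃ n : ℕ, ¬ t ^ n ∣ a)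
    {a : A} (ha : a ≠ 0) : ∃ (k : ℕ) (a' : A), a = t ^ k * a' ∧ ¬ t ∣ a' := by
  obtain ⟨n, hn⟩ := hbd a ha
  clear ha hbd
  induction n generalizing a with
  | zero => exact absurd (by simpa using dvd_refl (1:A)) hn
  | succ n ih =>
    by_cases hta : t ∣ a
    · obtain ⟨b, rfl⟩ := hta
      have hnb : ¬ t ^ n ∣ b := fun ⟨d, hd⟩ => hn ⟨d, by rw [hd]; ring⟩
      obtain ⟨k, a', rfl, h'⟩ := ih hnb
      exact ⟨k + 1, a', by ring, h'⟩
    · exact ⟨0, a, by simp, hta⟩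

theorem nagata (φ : A →+* B) (hinj : Function.Injective φ) (t : A) (ht : Prime t)
    (htu : IsUnit (φ t))
    (hsurj : ∀ b : B, ∃ (n : ℕ) (a : A), φ t ^ n * b = φ a)
    (hbd : ∀ a : A, a ≠ 0 → ∃ n : ℕ, ¬ t ^ n ∣ a)
    [UniqueFactorizationMonoid B] : UniqueFactorizationMonoid A := by
  apply UniqueFactorizationMonoid.of_exists_prime_factors
  have key : ∀ a : A, a ≠ 0 → ¬ t ∣ a →
      ∃ f : Multiset A, (∀ b ∈ f, Prime b) ∧ Associated f.prod a := by
    intro a ha hta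
    have hφa : φ a ≠ 0 := fun h => ha (hinj (by simpa using h))
    obtain ⟨f, hf, hassoc⟩ := UniqueFactorizationMonoid.exists_prime_factors (φ a) hφa
    have hch : ∀ q ∈ f, ∃ a' : A, Prime a' ∧ ¬ t ∣ a' ∧ Associated (φ a') q := by
      intro q hq
      obtain ⟨n, aq, haq⟩ := hsurj q
      have haq0 : aq ≠ 0 := by
        intro h
        rw [h, map_zero] at haq
        rcases mul_eq_zero.1 haq with h' | h'
        · exact pow_ne_zero _ htu.ne_zero h'
        · exact (hf q hq).ne_zero h'
      obtain ⟨k, a', rfl, hta'⟩ := strip ht hbd haq0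
      have h1 : φ t ^ k * φ a' = φ t ^ n * q := by
        rw [← map_pow, ← map_mul, haq]
      have hassoc' : Associated (φ a') q :=
        ((associated_unit_mul_left (φ a') _ (htu.pow k)).symm.trans (h1 ▸ Associated.refl _)).trans
          (associated_unit_mul_left q _ (htu.pow n))
      exact ⟨a', prime_of_map hinj ht hsurj hta' (hassoc'.symm.prime (hf q hq)),
        hta', hassoc'⟩
    -- choose a multiset of primes in A
    have main : ∀ f' : Multiset B,
        (∀ q ∈ f', ∃ a' : A, Prime a' ∧ ¬ t ∣ a' ∧ Associated (φ a') q) →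
        ∃ g : Multiset A, (∀ b ∈ g, Prime b) ∧ ¬ t ∣ g.prod ∧
          Associated (φ g.prod) f'.prod := by
      intro f'
      induction f' using Multiset.induction with
      | empty =>
        intro _
        exact ⟨0, by simp, fun h => ht.not_unit (isUnit_of_dvd_one (by simpa using h)),
          by simp⟩
      | cons q f'' ih =>
        intro h
        obtain ⟨a', hpa', hta', hassoc'⟩ := h q (Multiset.mem_cons_self _ _)
        obtain ⟨g, hg, htg, hgassoc⟩ := ih (fun q' hq' => h q' (Multiset.mem_cons_of_mem hq'))
        refine ⟨a' ::ₘ g, ?_, ?_, ?_⟩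
        · intro b hb
          rcases Multiset.mem_cons.1 hb with rfl | hb
          · exact hpa'
          · exact hg b hb
        · rw [Multiset.prod_cons]
          intro hd
          rcases ht.2.2 _ _ hd with h' | h'
          · exact hta' h'
          · exact htg h'
        · rw [Multiset.prod_cons, Multiset.prod_cons, map_mul]
          exact hassoc'.mul_mul hgassoc
    obtain ⟨g, hg, htg, hgassoc⟩ := main f hch
    refine ⟨g, hg, ?_⟩
    -- Associated g.prod a
    have h2 : Associated (φ g.prod) (φ a) := hgassoc.trans hassoc
    obtain ⟨v, hv⟩ := h2
    obtain ⟨n, c, hc⟩ := hsurj (v : B)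
    have e1 : t ^ n * a = g.prod * c := by
      apply hinj
      simp only [map_mul, map_pow, ← hc, ← hv]; ring
    obtain ⟨n', c', hc'⟩ := hsurj ((v⁻¹ : Bˣ) : B)
    have e2 : t ^ n' * g.prod = a * c' := by
      apply hinj
      simp only [map_mul, map_pow]
      rw [← hc', ← hv, mul_mul_mul_comm, Units.mul_inv, mul_one, mul_comm]
    exact associated_of_dvd_dvd (descent_aux ht htg n a c e1)
      (descent_aux ht hta n' g.prod c' e2)
  -- general case
  intro a ha
  obtain ⟨k, a', rfl, hta'⟩ := strip ht hbd ha
  have ha' : a' ≠ 0 := fun h => ha (by simp [h])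
  obtain ⟨g, hg, hgassoc⟩ := key a' ha' hta'
  refine ⟨Multiset.replicate k t + g, ?_, ?_⟩
  · intro b hb
    rcases Multiset.mem_add.1 hb with hb | hb
    · rw [Multiset.eq_of_mem_replicate hb]; exact ht
    · exact hg b hb
  · rw [Multiset.prod_add, Multiset.prod_replicate]
    exact (Associated.refl (t ^ k)).mul_mul hgassoc

end Nagata

section Laurent
open Polynomial LaurentPolynomial
variable {R : Type*} [CommRing R] [IsDomain R]

instance laurent_isDomain : IsDomain (R[T;T⁻¹]) := NoZeroDivisors.to_isDomain _

lemma dvd_X_of_prime_dvd_pow {q : R[X]} (hq : Prime q) {n : ℕ} (h : q ∣ X ^ n) : X ∣ q := by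
  have hqX : q ∣ X := hq.dvd_of_dvd_pow h
  obtain ⟨r, hr⟩ := hqX
  rcases (Polynomial.irreducible_X (R := R)).isUnit_or_isUnit hr with h' | h'
  · exact absurd h' hq.not_unit
  · obtain ⟨u, rfl⟩ := h'
    exact ⟨(u⁻¹ : R[X]ˣ), by rw [hr, mul_assoc, Units.mul_inv, mul_one]⟩

lemma prime_toLaurent {q : R[X]} (hq : Prime q) (hX : ¬ (X ∣ q)) :
    Prime (toLaurent q : R[T;T⁻¹]) := by
  constructor
  · simpa using hq.ne_zero
  constructor
  · intro h
    obtain ⟨w, hw⟩ := h.exists_right_inv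
    obtain ⟨n, g, hg⟩ := exists_T_pow w
    have : (X : R[X]) ^ n = q * g := by
      apply toLaurent_injective
      rw [toLaurent_X_pow, map_mul, hg, ← mul_assoc, hw, one_mul]
    exact hX (dvd_X_of_prime_dvd_pow hq ⟨g, this⟩)
  · intro b₁ b₂ hdvd
    obtain ⟨n₁, f₁, hf₁⟩ := exists_T_pow b₁
    obtain ⟨n₂, f₂, hf₂⟩ := exists_T_pow b₂
    obtain ⟨w, hw⟩ := hdvd
    obtain ⟨m, g, hg⟩ := exists_T_pow (w * T n₁ * T n₂)
    have key : X ^ m * (f₁ * f₂) = q * g := by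
      apply toLaurent_injective
      rw [map_mul, map_mul, toLaurent_X_pow, map_mul, hf₁, hf₂, hg]
      linear_combination (T (n₁:ℤ) * T (n₂:ℤ) * T (m:ℤ)) * hw
    have hqd : q ∣ f₁ * f₂ := by
      rcases hq.2.2 _ _ (⟨g, key⟩ : q ∣ X ^ m * (f₁ * f₂)) with h' | h'
      · exact absurd (dvd_X_of_prime_dvd_pow hq h') hX
      · exact h'
    rcases hq.2.2 _ _ hqd with h' | h'
    · left
      obtain ⟨d, hd⟩ := h'
      refine ⟨toLaurent d * T (-n₁), ?_⟩
      have hb : b₁ = toLaurent f₁ * T (-n₁) := by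
        rw [hf₁, mul_T_assoc, add_neg_cancel, T_zero, mul_one]
      rw [hb, hd, map_mul]; ring
    · right
      obtain ⟨d, hd⟩ := h'
      refine ⟨toLaurent d * T (-n₂), ?_⟩
      have hb : b₂ = toLaurent f₂ * T (-n₂) := by
        rw [hf₂, mul_T_assoc, add_neg_cancel, T_zero, mul_one]
      rw [hb, hd, map_mul]; ring

lemma isUnit_multiset_prod {M : Type*} [CommMonoid M] (s : Multiset M)
    (h : ∀ x ∈ s, IsUnit x) : IsUnit s.prod := by
  induction s using Multiset.induction with
  | empty => simp
  | cons a s ih =>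
    rw [Multiset.prod_cons]
    exact (h a (Multiset.mem_cons_self a s)).mul
      (ih fun x hx => h x (Multiset.mem_cons_of_mem hx))

lemma isUnit_toLaurent_of_X_dvd {q : R[X]} (hq : Prime q) (hX : X ∣ q) :
    IsUnit (toLaurent q : R[T;T⁻¹]) := by
  obtain ⟨c, rfl⟩ := hX
  rcases hq.irreducible.isUnit_or_isUnit rfl with h' | h'
  · exact absurd h' Polynomial.not_isUnit_X
  · rw [map_mul, Polynomial.toLaurent_X]
    exact (isUnit_T 1).mul (h'.map toLaurent)

instance laurent_ufd [UniqueFactorizationMonoid R] :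
    UniqueFactorizationMonoid (R[T;T⁻¹]) := by
  classical
  apply UniqueFactorizationMonoid.of_exists_prime_factors
  intro b hb
  obtain ⟨n, f, hf⟩ := exists_T_pow b
  have hf0 : f ≠ 0 := by
    intro h
    rw [h, map_zero] at hf
    exact (mul_ne_zero hb ((isUnit_T (n : ℤ)).ne_zero)) hf.symm
  obtain ⟨m, hm, hassoc⟩ := UniqueFactorizationMonoid.exists_prime_factors f hf0
  set m₁ := m.filter (fun q => ¬ X ∣ q) with hm₁
  set m₂ := m.filter (fun q => X ∣ q) with hm₂
  have hsplit : m₂ + m₁ = m := Multiset.filter_add_not _ m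
  refine ⟨m₁.map toLaurent, ?_, ?_⟩
  · intro q hq
    obtain ⟨q', hq', rfl⟩ := Multiset.mem_map.1 hq
    rw [hm₁, Multiset.mem_filter] at hq'
    exact prime_toLaurent (hm q' hq'.1) hq'.2
  · have hu : IsUnit (toLaurent m₂.prod : R[T;T⁻¹]) := by
      rw [map_multiset_prod]
      apply isUnit_multiset_prod
      intro x hx
      obtain ⟨q', hq', rfl⟩ := Multiset.mem_map.1 hx
      rw [hm₂, Multiset.mem_filter] at hq'
      exact isUnit_toLaurent_of_X_dvd (hm q' hq'.1) hq'.2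
    have h1 : Associated ((m₁.map (⇑toLaurent)).prod) (toLaurent m.prod : R[T;T⁻¹]) := by
      rw [← hsplit, Multiset.prod_add, map_mul, map_multiset_prod toLaurent m₁]
      exact (associated_unit_mul_left _ _ hu).symm
    have h2 : Associated (toLaurent m.prod : R[T;T⁻¹]) (toLaurent f) :=
      hassoc.map toLaurent.toMonoidHom
    have h3 : Associated (toLaurent f : R[T;T⁻¹]) b := by
      rw [hf]; exact (associated_mul_unit_right b _ (isUnit_T (n:ℤ))).symm
    exact (h1.trans h2).trans h3

end Laurent
section Concrete
open Polynomial LaurentPolynomial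

variable {R : Type*} [CommRing R] [IsDomain R]

/-- generic expansion of a polynomial as a sum over its support -/
lemma poly_eq_sum_support {S : Type*} [CommSemiring S] (F : Polynomial S) :
    F = ∑ j ∈ F.support, Polynomial.C (F.coeff j) * Polynomial.X ^ j := by
  conv_lhs => rw [F.as_sum_support]
  exact Finset.sum_congr rfl fun j _ => (Polynomial.C_mul_X_pow_eq_monomial).symm

/-- The map `R[x][y] → R[T,T⁻¹]`, `x ↦ T`, `y ↦ p T⁻¹`. -/
noncomputable def theta (p : R) : Polynomial (Polynomial R) →+* R[T;T⁻¹] :=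
  Polynomial.eval₂RingHom Polynomial.toLaurent (LaurentPolynomial.C p * T (-1))

/-- The element `xy - p` of `R[x][y]`. -/
noncomputable def genP (p : R) : Polynomial (Polynomial R) :=
  Polynomial.C Polynomial.X * Polynomial.X - Polynomial.C (Polynomial.C p)

lemma theta_C (p : R) (f : Polynomial R) : theta p (Polynomial.C f) = Polynomial.toLaurent f := by
  simp [theta]

lemma theta_X (p : R) : theta p Polynomial.X = LaurentPolynomial.C p * T (-1) := by
  simp [theta]

lemma theta_CX (p : R) : theta p (Polynomial.C Polynomial.X) = T 1 := by
  simp [theta]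

lemma theta_gen (p : R) : theta p (genP p) = 0 := by
  have h : (T (1:ℤ) * T (-1) : R[T;T⁻¹]) = 1 := by rw [← T_add]; simp
  rw [genP, map_sub, map_mul, theta_C, theta_C, theta_X, Polynomial.toLaurent_X,
    Polynomial.toLaurent_C, ← mul_assoc, mul_comm (T 1) (LaurentPolynomial.C p), mul_assoc, h,
    mul_one, sub_self]

lemma CX_pow_mul_mem (p : R) (F : Polynomial (Polynomial R)) :
    ∃ Q : Polynomial R,
      Polynomial.C Polynomial.X ^ F.natDegree * F - Polynomial.C Q ∈ Ideal.span {genP p} := by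
  classical
  set N := F.natDegree with hN
  refine ⟨∑ j ∈ F.support, Polynomial.C (p ^ j) * Polynomial.X ^ (N - j) * F.coeff j, ?_⟩
  have hs : ∀ j ∈ F.support, j ≤ N := fun j hj => Polynomial.le_natDegree_of_mem_supp j hj
  have e1 : Polynomial.C Polynomial.X ^ N * F
      = ∑ j ∈ F.support, Polynomial.C Polynomial.X ^ N *
        (Polynomial.C (F.coeff j) * Polynomial.X ^ j) := by
    rw [← Finset.mul_sum, ← poly_eq_sum_support]
  have e2 : (Polynomial.C (∑ j ∈ F.support,
        Polynomial.C (p ^ j) * Polynomial.X ^ (N - j) * F.coeff j) :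
        Polynomial (Polynomial R))
      = ∑ j ∈ F.support, Polynomial.C
          (Polynomial.C (p ^ j) * Polynomial.X ^ (N - j) * F.coeff j) := by
    rw [map_sum]
  rw [e1, e2, ← Finset.sum_sub_distrib]
  refine Ideal.sum_mem _ fun j hj => ?_
  have hjN := hs j hj
  have hterm : Polynomial.C Polynomial.X ^ N * (Polynomial.C (F.coeff j) * Polynomial.X ^ j) -
      Polynomial.C (Polynomial.C (p ^ j) * Polynomial.X ^ (N - j) * F.coeff j)
      = Polynomial.C (F.coeff j) * Polynomial.C Polynomial.X ^ (N - j) *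
        ((Polynomial.C Polynomial.X * Polynomial.X) ^ j -
          Polynomial.C (Polynomial.C p) ^ j) := by
    have hsplit : (Polynomial.C Polynomial.X : Polynomial (Polynomial R)) ^ N
        = Polynomial.C Polynomial.X ^ (N - j) * Polynomial.C Polynomial.X ^ j := by
      rw [← pow_add, Nat.sub_add_cancel hjN]
    rw [hsplit]
    simp only [map_mul, map_pow]
    ring
  rw [hterm]
  exact Ideal.mem_span_singleton.2 ((sub_dvd_pow_sub_pow _ _ j).mul_left _)

lemma theta_ker (p : R) (hp0 : p ≠ 0) {F : Polynomial (Polynomial R)}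
    (hF : theta p F = 0) : F ∈ Ideal.span {genP p} := by
  obtain ⟨Q, hQ⟩ := CX_pow_mul_mem p F
  obtain ⟨G, hG⟩ := Ideal.mem_span_singleton.1 hQ
  have h1 : theta p (Polynomial.C Polynomial.X ^ F.natDegree * F - Polynomial.C Q) = 0 := by
    rw [hG, map_mul, theta_gen, zero_mul]
  rw [map_sub, map_mul, map_pow, hF, mul_zero, zero_sub, theta_C, neg_eq_zero] at h1
  have hQ0 : Q = 0 := Polynomial.toLaurent_injective (by rw [h1, map_zero])
  rw [hQ0, map_zero, sub_zero] at hG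
  have hprime : Prime (Polynomial.C Polynomial.X : Polynomial (Polynomial R)) :=
    Polynomial.prime_C_iff.2 Polynomial.prime_X
  have hCX0 : (Polynomial.C Polynomial.X : Polynomial (Polynomial R)) ≠ 0 :=
    fun h => Polynomial.X_ne_zero (Polynomial.C_eq_zero.1 h)
  have hnd : ¬ (Polynomial.C Polynomial.X : Polynomial (Polynomial R)) ∣ genP p := by
    intro hdvd
    have h2 : (Polynomial.C Polynomial.X : Polynomial (Polynomial R)) ∣
        Polynomial.C (Polynomial.C p) := by
      have h3 : (Polynomial.C (Polynomial.C p) : Polynomial (Polynomial R))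
          = Polynomial.C Polynomial.X * Polynomial.X - genP p := by
        rw [genP]; ring
      rw [h3]
      exact dvd_sub (Dvd.intro _ rfl) hdvd
    have h4 := map_dvd (Polynomial.evalRingHom (0 : Polynomial R)) h2
    simp only [Polynomial.eval_C, Polynomial.coe_evalRingHom] at h4
    rw [Polynomial.X_dvd_iff] at h4
    simp at h4
    exact hp0 h4
  have hdvdG : (Polynomial.C Polynomial.X : Polynomial (Polynomial R)) ^ F.natDegree ∣ G :=
    hprime.pow_dvd_of_dvd_mul_left _ hnd ⟨F, hG.symm⟩
  obtain ⟨G', rfl⟩ := hdvdG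
  rw [Ideal.mem_span_singleton]
  refine ⟨G', mul_left_cancel₀ (pow_ne_zero F.natDegree hCX0) ?_⟩
  rw [hG]; ring

end Concrete
section Concrete2
open Polynomial LaurentPolynomial

variable {R : Type*} [CommRing R] [IsDomain R]

/-- The map `R[x][y] → (R/p)[y]`, killing `x` and `p`. -/
noncomputable def rho (p : R) :
    Polynomial (Polynomial R) →+* Polynomial (R ⧸ Ideal.span {p}) :=
  Polynomial.mapRingHom ((Ideal.Quotient.mk (Ideal.span {p})).comp (Polynomial.evalRingHom 0))

lemma inner_mem (p : R) {f : Polynomial R} (hf : Polynomial.eval 0 f ∈ Ideal.span {p}) :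
    f ∈ Ideal.span {Polynomial.X, Polynomial.C p} := by
  obtain ⟨r, hr⟩ := Ideal.mem_span_singleton'.1 hf
  have hXd : Polynomial.X ∣ f - Polynomial.C (Polynomial.eval 0 f) := by
    rw [Polynomial.X_dvd_iff]
    simp [Polynomial.coeff_zero_eq_eval_zero]
  obtain ⟨u, hu⟩ := hXd
  rw [Ideal.mem_span_pair]
  refine ⟨u, Polynomial.C r, ?_⟩
  have : f - Polynomial.C (Polynomial.eval 0 f) = Polynomial.X * u := hu
  rw [← hr, map_mul] at this
  linear_combination -this

lemma rho_ker (p : R) {F : Polynomial (Polynomial R)} (hF : rho p F = 0) :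
    F ∈ Ideal.span {(Polynomial.C Polynomial.X : Polynomial (Polynomial R)),
      Polynomial.C (Polynomial.C p)} := by
  have hcoeff : ∀ j, F.coeff j ∈ Ideal.span {Polynomial.X, Polynomial.C p} := by
    intro j
    apply inner_mem
    have h1 : (rho p F).coeff j = 0 := by rw [hF]; rfl
    rw [rho, Polynomial.coe_mapRingHom, Polynomial.coeff_map] at h1
    exact Ideal.Quotient.eq_zero_iff_mem.1 h1
  have hex : F = ∑ j ∈ F.support, Polynomial.C (F.coeff j) * Polynomial.X ^ j :=
    poly_eq_sum_support F
  rw [hex]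
  refine Ideal.sum_mem _ fun j hj => ?_
  apply Ideal.mul_mem_right
  obtain ⟨a, b, hab⟩ := Ideal.mem_span_pair.1 (hcoeff j)
  rw [Ideal.mem_span_pair]
  exact ⟨Polynomial.C a, Polynomial.C b, by rw [← map_mul, ← map_mul, ← map_add, hab]⟩

lemma span_pair_isPrime (p : R) (hp : Prime p) :
    (Ideal.span {(Polynomial.C Polynomial.X : Polynomial (Polynomial R)),
      Polynomial.C (Polynomial.C p)}).IsPrime := by
  haveI : (Ideal.span {p}).IsPrime := (Ideal.span_singleton_prime hp.ne_zero).2 hp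
  have heq : Ideal.span {(Polynomial.C Polynomial.X : Polynomial (Polynomial R)),
      Polynomial.C (Polynomial.C p)} = RingHom.ker (rho p) := by
    apply le_antisymm
    · rw [Ideal.span_le]
      rintro x (rfl | rfl)
      · simp [RingHom.mem_ker, rho]
      · simp [RingHom.mem_ker, rho, Ideal.Quotient.eq_zero_iff_mem,
          Ideal.mem_span_singleton]
    · intro F hF
      exact rho_ker p hF
  rw [heq]
  exact RingHom.ker_isPrime _

lemma I_eq_ker (p : R) (hp0 : p ≠ 0) :
    Ideal.span {genP p} = RingHom.ker (theta (R := R) p) := by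
  apply le_antisymm
  · rw [Ideal.span_le]
    rintro x rfl
    · simp only [SetLike.mem_coe, RingHom.mem_ker]
      exact theta_gen p
  · intro F hF
    exact theta_ker p hp0 hF

lemma I_isPrime (p : R) (hp0 : p ≠ 0) : (Ideal.span {genP p}).IsPrime := by
  rw [I_eq_ker p hp0]
  exact RingHom.ker_isPrime _

/-- The embedding of the quotient into Laurent polynomials. -/
noncomputable def psi (p : R) :
    (Polynomial (Polynomial R) ⧸ Ideal.span {genP p}) →+* R[T;T⁻¹] :=
  Ideal.Quotient.lift _ (theta p) (by
    intro a ha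
    obtain ⟨b, rfl⟩ := Ideal.mem_span_singleton.1 ha
    rw [map_mul, theta_gen, zero_mul])

lemma psi_mk (p : R) (F : Polynomial (Polynomial R)) :
    psi p (Ideal.Quotient.mk _ F) = theta p F := rfl

lemma psi_inj (p : R) (hp0 : p ≠ 0) : Function.Injective (psi p) := by
  rw [injective_iff_map_eq_zero]
  intro a ha
  obtain ⟨F, rfl⟩ := Ideal.Quotient.mk_surjective a
  rw [psi_mk] at ha
  rw [Ideal.Quotient.eq_zero_iff_mem]
  exact theta_ker p hp0 ha

lemma t_ne_zero (p : R) (hp0 : p ≠ 0) :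
    Ideal.Quotient.mk (Ideal.span {genP p}) (Polynomial.C Polynomial.X) ≠ 0 := by
  intro h
  rw [Ideal.Quotient.eq_zero_iff_mem, I_eq_ker p hp0, RingHom.mem_ker, theta_CX] at h
  exact (isUnit_T 1).ne_zero h

lemma sup_eq (p : R) : Ideal.span {genP p} ⊔
    Ideal.span {(Polynomial.C Polynomial.X : Polynomial (Polynomial R))} =
    Ideal.span {(Polynomial.C Polynomial.X : Polynomial (Polynomial R)),
      Polynomial.C (Polynomial.C p)} := by
  rw [← Ideal.span_union, Set.union_singleton]
  apply le_antisymm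
  · rw [Ideal.span_le]
    rintro x (rfl | rfl)
    · exact Ideal.subset_span (by simp)
    · rw [SetLike.mem_coe, Ideal.mem_span_pair]
      exact ⟨Polynomial.X, -1, by rw [genP]; ring⟩
  · rw [Ideal.span_le]
    rintro x (rfl | rfl)
    · exact Ideal.subset_span (by simp)
    · rw [SetLike.mem_coe, Ideal.mem_span_pair]
      exact ⟨Polynomial.X, -1, by rw [genP]; ring⟩

lemma prime_t (p : R) (hp : Prime p) :
    Prime (Ideal.Quotient.mk (Ideal.span {genP p}) (Polynomial.C Polynomial.X)) := by
  haveI := I_isPrime p hp.ne_zero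
  rw [← Ideal.span_singleton_prime (t_ne_zero p hp.ne_zero)]
  have hmap : Ideal.span {Ideal.Quotient.mk (Ideal.span {genP p})
        (Polynomial.C Polynomial.X)} =
      Ideal.map (Ideal.Quotient.mk (Ideal.span {genP p}))
        (Ideal.span {(Polynomial.C Polynomial.X : Polynomial (Polynomial R))}) := by
    rw [Ideal.map_span, Set.image_singleton]
  rw [hmap]
  haveI hsupP : (Ideal.span {genP p} ⊔
      Ideal.span {(Polynomial.C Polynomial.X : Polynomial (Polynomial R))}).IsPrime := by
    rw [sup_eq p]
    exact span_pair_isPrime p hp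
  rw [← Ideal.Quotient.isDomain_iff_prime]
  exact Function.Injective.isDomain
    (DoubleQuot.quotQuotEquivQuotSup (Ideal.span {genP p})
      (Ideal.span {(Polynomial.C Polynomial.X : Polynomial (Polynomial R))})).toRingHom
    (RingEquiv.injective _)

end Concrete2
section Concrete3
open Polynomial LaurentPolynomial

variable {R : Type*} [CommRing R] [IsDomain R]

/-- The swap `x ↔ y` on `R[x][y]`. -/
noncomputable def swapHom : Polynomial (Polynomial R) →+* Polynomial (Polynomial R) :=
  Polynomial.eval₂RingHom
    (Polynomial.eval₂RingHom (Polynomial.C.comp Polynomial.C) Polynomial.X)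
    (Polynomial.C Polynomial.X)

lemma swapHom_CC (r : R) :
    swapHom (Polynomial.C (Polynomial.C r)) = Polynomial.C (Polynomial.C r) := by
  simp [swapHom]

lemma swapHom_CX :
    swapHom (Polynomial.C (Polynomial.X : Polynomial R)) = Polynomial.X := by
  simp [swapHom]

lemma swapHom_X :
    swapHom (Polynomial.X : Polynomial (Polynomial R)) = Polynomial.C Polynomial.X := by
  simp [swapHom]

lemma swapHom_swapHom :
    (swapHom (R := R)).comp swapHom = RingHom.id _ := by
  apply Polynomial.ringHom_ext
  · intro f
    have h : ((swapHom (R := R)).comp swapHom).comp Polynomial.C =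
        (RingHom.id _).comp Polynomial.C := by
      apply Polynomial.ringHom_ext
      · intro r
        simp [RingHom.comp_apply, swapHom_CC]
      · simp [RingHom.comp_apply, swapHom_CX, swapHom_X]
    exact RingHom.congr_fun h f
  · simp [RingHom.comp_apply, swapHom_X, swapHom_CX]

/-- The swap as a ring equivalence. -/
noncomputable def swapEquiv : Polynomial (Polynomial R) ≃+* Polynomial (Polynomial R) :=
  RingEquiv.ofRingHom swapHom swapHom swapHom_swapHom swapHom_swapHom

lemma swap_gen (p : R) : swapHom (genP p) = genP p := by
  rw [genP, map_sub, map_mul, swapHom_CX, swapHom_X, swapHom_CC]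
  ring

/-- The induced swap on the quotient. -/
noncomputable def swapD (p : R) :
    (Polynomial (Polynomial R) ⧸ Ideal.span {genP p}) ≃+*
    (Polynomial (Polynomial R) ⧸ Ideal.span {genP p}) :=
  Ideal.quotientEquiv _ _ swapEquiv (by
    rw [Ideal.map_span, Set.image_singleton]
    have h : (↑(swapEquiv (R := R)) : Polynomial (Polynomial R) →+* Polynomial (Polynomial R))
        (genP p) = genP p := swap_gen p
    rw [h])

lemma hbd_lemma (p : R) (hp : Prime p) [UniqueFactorizationMonoid R]
    (a : Polynomial (Polynomial R) ⧸ Ideal.span {genP p}) (ha : a ≠ 0) :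
    ∃ n : ℕ, ¬ (Ideal.Quotient.mk (Ideal.span {genP p}) (Polynomial.C Polynomial.X)) ^ n ∣ a := by
  classical
  set a' := swapD p a with ha'
  have ha'0 : a' ≠ 0 := fun h => ha (by
    have := congrArg (swapD p).symm h
    rwa [RingEquiv.symm_apply_apply, map_zero] at this)
  have hψ : psi p a' ≠ 0 := fun h => ha'0 (by
    apply psi_inj p hp.ne_zero
    rw [h, map_zero])
  obtain ⟨k, hk⟩ : ∃ k, (psi p a').coeff k ≠ 0 := by
    by_contra h
    push_neg at h
    exact hψ (AddMonoidAlgebra.ext (Finsupp.ext h))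
  obtain ⟨n, hn⟩ := FiniteMultiplicity.of_prime_left hp hk
  refine ⟨n + 1, fun hdvd => hn ?_⟩
  have h2 : (swapD p (Ideal.Quotient.mk _ (Polynomial.C Polynomial.X))) ^ (n + 1) ∣ a' := by
    obtain ⟨e, he⟩ := hdvd
    exact ⟨swapD p e, by rw [ha', he, map_mul, map_pow]⟩
  have h3 : swapD p (Ideal.Quotient.mk _ (Polynomial.C Polynomial.X)) =
      Ideal.Quotient.mk _ (Polynomial.X : Polynomial (Polynomial R)) := by
    rw [swapD, Ideal.quotientEquiv_mk]
    congr 1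
    exact swapHom_CX
  rw [h3] at h2
  have h4 : psi p (Ideal.Quotient.mk _ (Polynomial.X : Polynomial (Polynomial R))) =
      LaurentPolynomial.C p * T (-1) := by
    rw [psi_mk, theta_X]
  have h5 : LaurentPolynomial.C (p ^ (n + 1)) ∣ psi p a' := by
    obtain ⟨w, hw⟩ := h2
    refine ⟨(T (-1)) ^ (n + 1) * psi p w, ?_⟩
    rw [hw, map_mul, map_pow, h4, map_pow, mul_pow]
    ring
  obtain ⟨h7, hh⟩ := h5
  refine ⟨h7.coeff k, ?_⟩
  have hC : (LaurentPolynomial.C (p ^ (n + 1)) : R[T;T⁻¹])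
      = AddMonoidAlgebra.single 0 (p ^ (n + 1)) := rfl
  rw [hh, hC]
  exact AddMonoidAlgebra.coeff_single_zero_mul h7 (p ^ (n + 1)) k

lemma psi_t (p : R) :
    psi p (Ideal.Quotient.mk (Ideal.span {genP p}) (Polynomial.C Polynomial.X)) = T 1 := by
  rw [psi_mk, theta_CX]

lemma hsurj_lemma (p : R) (l : R[T;T⁻¹]) :
    ∃ (n : ℕ) (d : Polynomial (Polynomial R) ⧸ Ideal.span {genP p}),
      (psi p (Ideal.Quotient.mk (Ideal.span {genP p}) (Polynomial.C Polynomial.X))) ^ n * l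
        = psi p d := by
  obtain ⟨n, f, hf⟩ := exists_T_pow l
  refine ⟨n, Ideal.Quotient.mk _ (Polynomial.C f), ?_⟩
  rw [psi_t, psi_mk, theta_C, hf, T_pow, mul_comm]
  norm_num

theorem DP_ufd (p : R) (hp : Prime p) [UniqueFactorizationMonoid R] :
    ∃ hD : IsDomain (Polynomial (Polynomial R) ⧸ Ideal.span {genP p}),
      UniqueFactorizationMonoid (Polynomial (Polynomial R) ⧸ Ideal.span {genP p}) := by
  haveI := I_isPrime p hp.ne_zero
  refine ⟨inferInstance, ?_⟩
  exact nagata (A := Polynomial (Polynomial R) ⧸ Ideal.span {genP p}) (B := R[T;T⁻¹]) (psi p)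
    (psi_inj p hp.ne_zero) (Ideal.Quotient.mk (Ideal.span {genP p}) (Polynomial.C Polynomial.X))
    (prime_t p hp)
    (by rw [psi_t]; exact isUnit_T 1)
    (hsurj_lemma p)
    (hbd_lemma p hp)

end Concrete3
section Final
open MvPolynomial Polynomial LaurentPolynomial

variable {R : Type*} [CommRing R] [IsDomain R]

noncomputable def uHom : MvPolynomial (Fin 2) R →+* Polynomial (Polynomial R) :=
  MvPolynomial.eval₂Hom (Polynomial.C.comp Polynomial.C)
    ![Polynomial.C Polynomial.X, Polynomial.X]

noncomputable def vHom : Polynomial (Polynomial R) →+* MvPolynomial (Fin 2) R :=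
  Polynomial.eval₂RingHom
    (Polynomial.eval₂RingHom (MvPolynomial.C) (MvPolynomial.X 0))
    (MvPolynomial.X 1)

lemma vu : (vHom (R := R)).comp uHom = RingHom.id _ := by
  apply MvPolynomial.ringHom_ext
  · intro r
    simp [uHom, vHom]
  · intro i
    fin_cases i <;> simp [uHom, vHom]

lemma uv : (uHom (R := R)).comp vHom = RingHom.id _ := by
  apply Polynomial.ringHom_ext
  · intro f
    have h : ((uHom (R := R)).comp vHom).comp Polynomial.C =
        (RingHom.id _).comp Polynomial.C := by
      apply Polynomial.ringHom_ext
      · intro r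
        simp [uHom, vHom]
      · simp [uHom, vHom]
    exact RingHom.congr_fun h f
  · simp [uHom, vHom]

noncomputable def eEquiv : MvPolynomial (Fin 2) R ≃+* Polynomial (Polynomial R) :=
  RingEquiv.ofRingHom uHom vHom uv vu

lemma e_gen (p : R) :
    (↑(eEquiv (R := R)) : MvPolynomial (Fin 2) R →+* Polynomial (Polynomial R))
      (X 0 * X 1 - MvPolynomial.C p) = genP p := by
  show uHom (X 0 * X 1 - MvPolynomial.C p) = genP p
  rw [map_sub, map_mul, genP]
  simp [uHom]

theorem stmt7' (p : R) (hp : Prime p) [UniqueFactorizationMonoid R] :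
    ∃ hD : IsDomain (MvPolynomial (Fin 2) R ⧸
        Ideal.span {(X 0 * X 1 - MvPolynomial.C p : MvPolynomial (Fin 2) R)}),
      UniqueFactorizationMonoid (MvPolynomial (Fin 2) R ⧸
          Ideal.span {(X 0 * X 1 - MvPolynomial.C p : MvPolynomial (Fin 2) R)}) := by
  obtain ⟨hDP, hUF⟩ := DP_ufd p hp
  haveI := hDP
  have E := Ideal.quotientEquiv
    (Ideal.span {(X 0 * X 1 - MvPolynomial.C p : MvPolynomial (Fin 2) R)})
    (Ideal.span {genP p}) eEquiv
    (by rw [Ideal.map_span, Set.image_singleton, e_gen])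
  haveI hD : IsDomain (MvPolynomial (Fin 2) R ⧸
      Ideal.span {(X 0 * X 1 - MvPolynomial.C p : MvPolynomial (Fin 2) R)}) :=
    Function.Injective.isDomain E.toRingHom E.injective
  refine ⟨hD, ?_⟩
  exact MulEquiv.uniqueFactorizationMonoid (E.symm.toMulEquiv) hUF

end Final

section Statement
open MvPolynomial

/-- If `R` is a UFD and `p` prime, then `R' = R[x,y]/(xy - p)` is a UFD
(in particular it is a domain). -/
theorem stmt7 (R : Type*) [CommRing R] [IsDomain R] [UniqueFactorizationMonoid R]
    (p : R) (hp : Prime p) :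
    ∃ hD : IsDomain (MvPolynomial (Fin 2) R ⧸
        Ideal.span {(X 0 * X 1 - C p : MvPolynomial (Fin 2) R)}),
      UniqueFactorizationMonoid (MvPolynomial (Fin 2) R ⧸
          Ideal.span {(X 0 * X 1 - C p : MvPolynomial (Fin 2) R)}) := by
  exact stmt7' p hp

end Statement
end

section
/- Let (I, <) be a totally ordered set and (R_i)_{i∈I} a family of UFDs with R_i ⊆ R_j whenever i < j (compatible ring embeddings). Let R := ⋃_{k∈I} R_k. Then the unit group of R is ⋃_{k∈I} U(R_k). Moreover, if for each nonzero nonunit r ∈ R there exists i ∈ I with r ∈ R_i such that for every j ≥ i the prime factorization of r in R_i remains a prime factorization of r in R_j, then R is a UFD. -/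
/-- A union `R` of a chain of UFDs `(R i)` (along a totally ordered index set,
with compatible injective embeddings `g i : R i →+* R` whose images cover `R`) has
`U(R) = ⋃ U(R i)`; and if every nonzero nonunit of `R` has a prime factorization in some `R i`
which remains a prime factorization in every `R j` with `i ≤ j`, then `R` is a UFD. -/
theorem stmt9 (I : Type*) [LinearOrder I] (Rs : I → Type*)
    [∀ i, CommRing (Rs i)] [∀ i, IsDomain (Rs i)] [∀ i, UniqueFactorizationMonoid (Rs i)]
    (f : ∀ i j : I, i ≤ j → Rs i →+* Rs j)
    (hf_id : ∀ i (h : i ≤ i), f i i h = RingHom.id (Rs i))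
    (hf_comp : ∀ i j k (hij : i ≤ j) (hjk : j ≤ k) (x : Rs i),
      f j k hjk (f i j hij x) = f i k (hij.trans hjk) x)
    (f_inj : ∀ i j (h : i ≤ j), Function.Injective (f i j h))
    (R : Type*) [CommRing R] [IsDomain R]
    (g : ∀ i : I, Rs i →+* R)
    (hg_comp : ∀ i j (h : i ≤ j) (x : Rs i), g j (f i j h x) = g i x)
    (g_inj : ∀ i, Function.Injective (g i))
    (hcover : ∀ r : R, ∃ (i : I) (x : Rs i), g i x = r) :
    (∀ r : R, IsUnit r ↔ ∃ (i : I) (x : Rs i), IsUnit x ∧ g i x = r) ∧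
    ((∀ r : R, r ≠ 0 → ¬ IsUnit r →
        ∃ (i : I) (x : Rs i) (l : Multiset (Rs i)) (u : Rs i),
          g i x = r ∧ IsUnit u ∧ x = u * l.prod ∧
          ∀ q ∈ l, ∀ j (h : i ≤ j), Prime (f i j h q)) →
      UniqueFactorizationMonoid R) := by

  have key_unit : ∀ r : R, IsUnit r ↔ ∃ (i : I) (x : Rs i), IsUnit x ∧ g i x = r := by
    intro r
    constructor
    · rintro ⟨u, rfl⟩
      obtain ⟨i, x, hx⟩ := hcover ↑u
      obtain ⟨j, y, hy⟩ := hcover ↑u⁻¹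
      refine ⟨max i j, f i (max i j) (le_max_left i j) x, ?_, by rw [hg_comp]; exact hx⟩
      have h2 : g (max i j) (f i (max i j) (le_max_left i j) x *
          f j (max i j) (le_max_right i j) y) = 1 := by
        rw [map_mul, hg_comp, hg_comp, hx, hy]; exact u.mul_inv
      have h1 : f i (max i j) (le_max_left i j) x * f j (max i j) (le_max_right i j) y = 1 :=
        g_inj _ (by rw [h2, map_one])
      exact isUnit_iff_exists_inv.mpr ⟨_, h1⟩
    · rintro ⟨i, x, hx, rfl⟩
      exact hx.map (g i)
  refine ⟨key_unit, fun hfac => ?_⟩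
  have key_prime : ∀ (i : I) (p : Rs i), (∀ j (h : i ≤ j), Prime (f i j h p)) →
      Prime (g i p) := by
    intro i p hp
    have hpi : Prime p := by have := hp i le_rfl; rwa [hf_id] at this
    refine ⟨fun h0 => hpi.ne_zero (g_inj i (by rw [h0, map_zero])), fun hu => ?_, ?_⟩
    · obtain ⟨j, y, hy, hgy⟩ := (key_unit _).mp hu
      have heq : f i (max i j) (le_max_left i j) p = f j (max i j) (le_max_right i j) y :=
        g_inj _ (by rw [hg_comp, hg_comp, hgy])
      exact (hp _ (le_max_left i j)).not_unit (heq ▸ hy.map (f j (max i j) (le_max_right i j)))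
    · intro a b hab
      obtain ⟨ja, xa, rfl⟩ := hcover a
      obtain ⟨jb, xb, rfl⟩ := hcover b
      obtain ⟨c, hc⟩ := hab
      obtain ⟨jc, xc, rfl⟩ := hcover c
      set k := max (max i ja) (max jb jc) with hk
      have hik : i ≤ k := le_trans (le_max_left i ja) (le_max_left _ _)
      have hjak : ja ≤ k := le_trans (le_max_right i ja) (le_max_left _ _)
      have hjbk : jb ≤ k := le_trans (le_max_left jb jc) (le_max_right _ _)
      have hjck : jc ≤ k := le_trans (le_max_right jb jc) (le_max_right _ _)
      have heq : f ja k hjak xa * f jb k hjbk xb = f i k hik p * f jc k hjck xc := by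
        apply g_inj k
        rw [map_mul, map_mul, hg_comp, hg_comp, hg_comp, hg_comp]
        exact hc
      rcases (hp k hik).2.2 _ _ ⟨_, heq⟩ with ⟨d, hd⟩ | ⟨d, hd⟩
      · left
        refine ⟨g k d, ?_⟩
        have h3 := congrArg (g k) hd
        rwa [map_mul, hg_comp, hg_comp] at h3
      · right
        refine ⟨g k d, ?_⟩
        have h3 := congrArg (g k) hd
        rwa [map_mul, hg_comp, hg_comp] at h3
  apply UniqueFactorizationMonoid.of_exists_prime_factors
  intro a ha
  by_cases hu : IsUnit a
  · exact ⟨0, by simp, by simpa using (associated_one_iff_isUnit.mpr hu).symm⟩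
  obtain ⟨i, x, l, u, hgx, huu, hxl, hql⟩ := hfac a ha hu
  refine ⟨l.map (g i), ?_, ?_⟩
  · intro b hb
    obtain ⟨q, hq, rfl⟩ := Multiset.mem_map.mp hb
    exact key_prime i q (fun j h => hql q hq j h)
  · refine ⟨(huu.map (g i)).unit, ?_⟩
    rw [IsUnit.unit_spec]
    rw [← hgx, hxl, map_mul, mul_comm]
    congr 1
    exact Multiset.prod_hom l (g i)
end

section
/- Let R be a UFD and {p_i : i ∈ I} pairwise nonassociate primes of R, and let R' = R[x_i, y_i : i ∈ I]/(x_i y_i - p_i : i ∈ I), with s_i, s_i' the images of x_i, y_i. Then for each i ∈ I, both s_i and s_i' are prime in R'; s_i is not associate to s_i'; and for j ≠ i, s_i is not associate to s_j or s_j'. Furthermore, any prime q of R not associate to any p_i remains prime in R' and is not associate to any s_i or s_i'. Finally, U(R') = U(R). -/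
open MvPolynomial

/-- The ideal `(xᵢ yᵢ - pᵢ : i ∈ I)` in `R[xᵢ, yᵢ : i ∈ I]`. -/
noncomputable def splitIdeal {R : Type*} [CommRing R] {I : Type*} (p : I → R) :
    Ideal (MvPolynomial (I × Bool) R) :=
  Ideal.span {f : MvPolynomial (I × Bool) R |
    ∃ i : I, f = X (i, true) * X (i, false) - C (p i)}

namespace Stmt12Aux

noncomputable section

variable {R : Type*} [CommRing R] {I : Type*} {D : Type*} [CommRing D]

/-- sign-generator in the free abelian group on `I`. -/
def gg : I × Bool → (I →₀ ℤ) := fun v =>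
  if v.2 then Finsupp.single v.1 1 else -Finsupp.single v.1 1

/-- exponent map -/
def expMap (m : (I × Bool) →₀ ℕ) : I →₀ ℤ := m.sum fun v k => k • gg v

lemma expMap_zero : expMap (0 : (I × Bool) →₀ ℕ) = 0 := Finsupp.sum_zero_index

lemma expMap_add (m₁ m₂ : (I × Bool) →₀ ℕ) :
    expMap (m₁ + m₂) = expMap m₁ + expMap m₂ :=
  Finsupp.sum_add_index' (fun v => zero_smul ℕ (gg v)) (fun v k l => add_smul k l (gg v))

lemma expMap_single (v : I × Bool) (k : ℕ) :
    expMap (Finsupp.single v k) = k • gg v :=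
  Finsupp.sum_single_index (zero_smul ℕ (gg v))

lemma expMap_apply (m : (I × Bool) →₀ ℕ) (j : I) :
    expMap m j = (m (j, true) : ℤ) - (m (j, false) : ℤ) := by
  induction m using Finsupp.induction with
  | zero => simp [expMap_zero]
  | single_add v k f hv hk ih =>
    rw [expMap_add, expMap_single]
    obtain ⟨i, b⟩ := v
    cases b <;>
      simp_all [gg, Finsupp.add_apply, Finsupp.single_apply, Prod.ext_iff, ih] <;>
      rcases eq_or_ne i j with rfl | hij <;> simp_all <;> ring

def Reduced (m : (I × Bool) →₀ ℕ) : Prop := ∀ i, m (i, true) = 0 ∨ m (i, false) = 0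

lemma expMap_inj {m m' : (I × Bool) →₀ ℕ} (hm : Reduced m) (hm' : Reduced m')
    (h : expMap m = expMap m') : m = m' := by
  ext v
  obtain ⟨j, b⟩ := v
  have h1 := congrArg (fun z => z j) h
  simp only [expMap_apply] at h1
  have h2 := hm j
  have h3 := hm' j
  cases b <;> omega

/-- weight of a monomial -/
def wt (d : I × Bool → D) (m : (I × Bool) →₀ ℕ) : D := m.prod fun v k => d v ^ k

lemma wt_zero (d : I × Bool → D) : wt d 0 = 1 := Finsupp.prod_zero_index
lemma wt_add (d : I × Bool → D) (m₁ m₂ : (I × Bool) →₀ ℕ) :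
    wt d (m₁ + m₂) = wt d m₁ * wt d m₂ :=
  Finsupp.prod_add_index' (fun v => pow_zero (d v)) (fun v k l => pow_add (d v) k l)
lemma wt_single (d : I × Bool → D) (v : I × Bool) (k : ℕ) :
    wt d (Finsupp.single v k) = d v ^ k :=
  Finsupp.prod_single_index (pow_zero (d v))

/-- The comparison homomorphism into a Laurent-type monoid algebra. -/
def phi (c : R →+* D) (d : I × Bool → D) :
    MvPolynomial (I × Bool) R →+* AddMonoidAlgebra D (I →₀ ℤ) :=
  eval₂Hom ((AddMonoidAlgebra.singleZeroRingHom).comp c)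
    (fun v => AddMonoidAlgebra.single (gg v) (d v))

lemma phi_C (c : R →+* D) (d : I × Bool → D) (r : R) :
    phi c d (C r) = AddMonoidAlgebra.single 0 (c r) := by
  simp [phi, AddMonoidAlgebra.singleZeroRingHom]

lemma phi_X (c : R →+* D) (d : I × Bool → D) (v : I × Bool) :
    phi c d (X v) = AddMonoidAlgebra.single (gg v) (d v) := by
  simp [phi]

lemma phi_monomial (c : R →+* D) (d : I × Bool → D) (m : (I × Bool) →₀ ℕ) (r : R) :
    phi c d (monomial m r) = AddMonoidAlgebra.single (expMap m) (c r * wt d m) := by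
  have key : (m.prod fun v k => AddMonoidAlgebra.single (gg v) (d v) ^ k) =
      AddMonoidAlgebra.single (expMap m) (wt d m) := by
    induction m using Finsupp.induction with
    | zero => simp [expMap_zero, wt_zero, AddMonoidAlgebra.one_def]
    | single_add v k f hv hk ih =>
      rw [Finsupp.prod_add_index' (fun w => pow_zero _) (fun w k l => pow_add _ k l),
        Finsupp.prod_single_index, ih, AddMonoidAlgebra.single_pow,
        AddMonoidAlgebra.single_mul_single, expMap_add, expMap_single, wt_add, wt_single]
      exact pow_zero _
  rw [phi, eval₂Hom_monomial, key]
  simp [AddMonoidAlgebra.singleZeroRingHom, AddMonoidAlgebra.single_mul_single]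

lemma X_dvd_monomial {v : I × Bool} {m : (I × Bool) →₀ ℕ} (h : m v ≠ 0) (r : R) :
    (X v : MvPolynomial (I × Bool) R) ∣ monomial m r := by
  classical
  have hs : Finsupp.single v 1 + (m - Finsupp.single v 1) = m := by
    ext w
    rw [Finsupp.add_apply, Finsupp.tsub_apply, Finsupp.single_apply]
    rcases eq_or_ne v w with rfl | hvw
    · rw [if_pos rfl]; omega
    · rw [if_neg hvw]; omega
  exact ⟨monomial (m - Finsupp.single v 1) r, by rw [X, monomial_mul, one_mul, hs]⟩

lemma C_dvd_monomial {q r : R} (h : q ∣ r) (m : (I × Bool) →₀ ℕ) :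
    (C q : MvPolynomial (I × Bool) R) ∣ monomial m r := by
  obtain ⟨s, rfl⟩ := h
  exact ⟨monomial m s, by rw [C_mul_monomial]⟩

lemma monred (p : I → R) (m : (I × Bool) →₀ ℕ) (r : R) :
    ∃ m' r', Reduced m' ∧ monomial m r - monomial m' r' ∈ splitIdeal p := by
  generalize hn : (m.sum fun _ k => k) = n
  induction n using Nat.strong_induction_on generalizing m r with
  | _ n ih =>
  by_cases hred : Reduced m
  · exact ⟨m, r, hred, by simp⟩
  · simp only [Reduced, not_forall, not_or] at hred
    obtain ⟨i, h1, h2⟩ := hred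
    set δ : (I × Bool) →₀ ℕ := Finsupp.single (i, true) 1 + Finsupp.single (i, false) 1 with hδ
    have hδsum : (δ.sum fun _ k => k) = 2 := by
      rw [Finsupp.sum_add_index' (fun _ => rfl) (fun _ _ _ => rfl),
        Finsupp.sum_single_index rfl, Finsupp.sum_single_index rfl]
    have hm0 : (m - δ) + δ = m := by
      ext w
      simp only [Finsupp.add_apply, Finsupp.tsub_apply, hδ, Finsupp.single_apply]
      rcases eq_or_ne ((i, true) : I × Bool) w with rfl | hw1
      · simp; omega
      · rcases eq_or_ne ((i, false) : I × Bool) w with rfl | hw2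
        · simp [hw1]; omega
        · simp [hw1, hw2]
    have hdeg : ((m - δ).sum fun _ k => k) < n := by
      have := Finsupp.sum_add_index' (f := m - δ) (g := δ)
        (h := fun (_ : I × Bool) (k : ℕ) => k) (fun _ => rfl) (fun _ _ _ => rfl)
      rw [hm0] at this
      omega
    obtain ⟨m', r', hred', hmem'⟩ := ih _ hdeg (m - δ) (r * p i) rfl
    refine ⟨m', r', hred', ?_⟩
    have key : monomial m r - monomial (m - δ) (r * p i) ∈ splitIdeal p := by
      have e1 : monomial m r = monomial (m - δ) r * (X (i, true) * X (i, false)) := by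
        rw [X, X, monomial_mul, monomial_mul, one_mul, mul_one, ← hδ, hm0]
      have e2 : monomial (m - δ) (r * p i) = monomial (m - δ) r * C (p i) := by
        rw [C_apply, monomial_mul, add_zero]
      rw [e1, e2, ← mul_sub]
      exact Ideal.mul_mem_left _ _ (Ideal.subset_span ⟨i, rfl⟩)
    have : monomial m r - monomial m' r' =
        (monomial m r - monomial (m - δ) (r * p i)) +
          (monomial (m - δ) (r * p i) - monomial m' r') := by ring
    rw [this]
    exact Ideal.add_mem _ key hmem'

lemma normal (p : I → R) (f : MvPolynomial (I × Bool) R) :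
    ∃ (T : Finset ((I × Bool) →₀ ℕ)) (ρ : ((I × Bool) →₀ ℕ) → R),
      (∀ m ∈ T, Reduced m) ∧ f - ∑ m ∈ T, monomial m (ρ m) ∈ splitIdeal p := by
  classical
  choose μ ρ₀ hred hmem using fun m => monred p m (coeff m f)
  refine ⟨f.support.image μ, fun n => ∑ m ∈ f.support.filter (fun m => μ m = n), ρ₀ m,
    ?_, ?_⟩
  · intro m hm
    obtain ⟨m₀, _, rfl⟩ := Finset.mem_image.mp hm
    exact hred m₀
  · have e1 : ∑ n ∈ f.support.image μ,
        monomial n (∑ m ∈ f.support.filter (fun m => μ m = n), ρ₀ m) =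
        ∑ m ∈ f.support, monomial (μ m) (ρ₀ m) := by
      refine Finset.sum_image' (fun m => monomial (μ m) (ρ₀ m)) ?_
      intro c hc
      rw [map_sum]
      exact Finset.sum_congr rfl fun x hx => by
        simp only [(Finset.mem_filter.mp hx).2]
    rw [e1]
    have e2 : f - ∑ m ∈ f.support, monomial (μ m) (ρ₀ m) =
        ∑ m ∈ f.support, (monomial m (coeff m f) - monomial (μ m) (ρ₀ m)) := by
      rw [Finset.sum_sub_distrib, support_sum_monomial_coeff]
    rw [e2]
    exact Ideal.sum_mem _ fun m _ => hmem m

lemma phi_gen_zero (p : I → R) (c : R →+* D) (d : I × Bool → D)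
    (hdp : ∀ i, d (i, true) * d (i, false) = c (p i)) :
    splitIdeal p ≤ RingHom.ker (phi c d) := by
  rw [splitIdeal, Ideal.span_le]
  rintro f ⟨i, rfl⟩
  simp only [SetLike.mem_coe, RingHom.mem_ker, map_sub, map_mul, phi_X, phi_C,
    AddMonoidAlgebra.single_mul_single, hdp]
  rw [sub_eq_zero]
  congr 1
  simp [gg]

lemma ker_phi (p : I → R) (c : R →+* D) (d : I × Bool → D)
    (E : Ideal (MvPolynomial (I × Bool) R))
    (hle : splitIdeal p ≤ E) (hker : E ≤ RingHom.ker (phi c d))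
    (h2 : ∀ m r, Reduced m → c r * wt d m = 0 → monomial m r ∈ E)
    (f : MvPolynomial (I × Bool) R) :
    phi c d f = 0 ↔ f ∈ E := by
  constructor
  · intro h0
    obtain ⟨T, ρ, hTred, hmem⟩ := normal p f
    have hs : phi c d (∑ m ∈ T, monomial m (ρ m)) = 0 := by
      have h3 : phi c d (f - ∑ m ∈ T, monomial m (ρ m)) = 0 := hker (hle hmem)
      rw [map_sub, h0, zero_sub, neg_eq_zero] at h3
      exact h3
    rw [map_sum] at hs
    simp only [phi_monomial] at hs
    have key : ∀ n ∈ T, c (ρ n) * wt d n = 0 := by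
      classical
      intro n hn
      have happ := congrArg (fun z => z.coeff (expMap n)) hs
      simp only [AddMonoidAlgebra.coeff_zero, AddMonoidAlgebra.coeff_sum,
        AddMonoidAlgebra.coeff_single, Finsupp.coe_zero, Pi.zero_apply] at happ
      rw [Finsupp.finset_sum_apply] at happ
      rw [Finset.sum_eq_single_of_mem n hn] at happ
      · rwa [Finsupp.single_apply, if_pos rfl] at happ
      · intro m hm hmn
        rw [Finsupp.single_apply, if_neg]
        exact fun he => hmn (expMap_inj (hTred m hm) (hTred n hn) he)
    have hf : f = (f - ∑ m ∈ T, monomial m (ρ m)) + ∑ m ∈ T, monomial m (ρ m) := by ring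
    rw [hf]
    exact Ideal.add_mem _ (hle hmem)
      (Ideal.sum_mem _ fun n hn => h2 n (ρ n) (hTred n hn) (key n hn))
  · exact fun hf => hker hf

lemma wt_map (c : R →+* D) (d₀ : I × Bool → R) (m : (I × Bool) →₀ ℕ) :
    wt (fun v => c (d₀ v)) m = c (wt d₀ m) := by
  unfold wt
  rw [Finsupp.prod, Finsupp.prod, map_prod]
  simp [map_pow]

/-- the base weights -/
def dBase (p : I → R) : I × Bool → R := fun v => if v.2 then 1 else p v.1

lemma hdp_base (p : I → R) :
    ∀ i, dBase p (i, true) * dBase p (i, false) = RingHom.id R (p i) := by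
  intro i; simp [dBase]

lemma ker_base [IsDomain R] (p : I → R)
    (hp0 : ∀ i, p i ≠ 0) (f : MvPolynomial (I × Bool) R) :
    phi (RingHom.id R) (dBase p) f = 0 ↔ f ∈ splitIdeal p := by
  refine ker_phi p _ _ _ le_rfl (phi_gen_zero p _ _ (hdp_base p)) ?_ f
  intro m r _ h0
  have hwt : wt (dBase p) m ≠ 0 := by
    refine Finset.prod_ne_zero_iff.mpr fun v hv => ?_
    refine pow_ne_zero _ ?_
    obtain ⟨j, b⟩ := v
    cases b <;> simp [dBase, hp0 j]
  rcases mul_eq_zero.mp h0 with h | h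
  · rw [RingHom.id_apply] at h
    rw [h, map_zero]
    exact Ideal.zero_mem _
  · exact absurd h hwt

open Classical in
/-- weights for the quotient by `sᵢ` (or `sᵢ'`). -/
def dS (p : I → R) (i₀ : I) (b₀ : Bool) : I × Bool → R := fun v =>
  if v.1 = i₀ then (if v.2 = b₀ then 0 else 1) else (if v.2 then 1 else p v.1)

lemma ker_S [IsDomain R] (p : I → R) (i₀ : I) (b₀ : Bool) (hp : ∀ i, Prime (p i))
    (hnonassoc : ∀ i j, i ≠ j → ¬ Associated (p i) (p j))
    (f : MvPolynomial (I × Bool) R) :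
    phi (Ideal.Quotient.mk (Ideal.span {p i₀}))
        (fun v => Ideal.Quotient.mk (Ideal.span {p i₀}) (dS p i₀ b₀ v)) f = 0 ↔
      f ∈ splitIdeal p ⊔ Ideal.span {X (i₀, b₀)} := by
  set c := Ideal.Quotient.mk (Ideal.span {p i₀}) with hc
  have hcz : ∀ r : R, c r = 0 ↔ p i₀ ∣ r := by
    intro r
    rw [hc, Ideal.Quotient.eq_zero_iff_mem, Ideal.mem_span_singleton]
  have hdp : ∀ i, c (dS p i₀ b₀ (i, true)) * c (dS p i₀ b₀ (i, false)) = c (p i) := by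
    intro i
    rcases eq_or_ne i i₀ with rfl | hne
    · have h0 : c (p i) = 0 := (hcz _).mpr dvd_rfl
      cases b₀ <;> simp [dS, h0]
    · simp [dS, hne]
  have hCp : C (p i₀) ∈ splitIdeal p ⊔ Ideal.span {X (i₀, b₀)} := by
    have he : (C (p i₀) : MvPolynomial (I × Bool) R) =
        X (i₀, true) * X (i₀, false) - (X (i₀, true) * X (i₀, false) - C (p i₀)) := by ring
    rw [he]
    refine sub_mem (Ideal.mem_sup_right (Ideal.mem_span_singleton.mpr ?_))
      (Ideal.mem_sup_left (Ideal.subset_span ⟨i₀, rfl⟩))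
    cases b₀
    · exact ⟨X (i₀, true), by ring⟩
    · exact ⟨X (i₀, false), by ring⟩
  refine ker_phi p _ _ _ le_sup_left ?_ ?_ f
  · refine sup_le (phi_gen_zero p _ _ hdp) ?_
    rw [Ideal.span_le]
    rintro g hg
    rw [Set.mem_singleton_iff.mp hg]
    simp only [SetLike.mem_coe, RingHom.mem_ker, phi_X]
    have : dS p i₀ b₀ (i₀, b₀) = 0 := by simp [dS]
    rw [this, map_zero]
    simp
  · intro m r _ h0
    by_cases hm : m (i₀, b₀) = 0
    · rw [wt_map, ← map_mul, hcz] at h0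
      have hnd : ¬ p i₀ ∣ wt (dS p i₀ b₀) m := by
        intro hdvd
        obtain ⟨v, hv, hdvd'⟩ := (hp i₀).exists_mem_finset_dvd hdvd
        have hdv := (hp i₀).dvd_of_dvd_pow hdvd'
        obtain ⟨j, b⟩ := v
        by_cases hji : j = i₀
        · by_cases hbb : b = b₀
          · exact (Finsupp.mem_support_iff.mp hv) (by rw [hji, hbb]; exact hm)
          · rw [show dS p i₀ b₀ (j, b) = 1 by simp [dS, hji, hbb]] at hdv
            exact (hp i₀).not_unit (isUnit_of_dvd_one hdv)
        · cases b
          · rw [show dS p i₀ b₀ (j, false) = p j by simp [dS, hji]] at hdv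
            exact hnonassoc i₀ j (fun he => hji he.symm) ((hp i₀).associated_of_dvd (hp j) hdv)
          · rw [show dS p i₀ b₀ (j, true) = 1 by simp [dS, hji]] at hdv
            exact (hp i₀).not_unit (isUnit_of_dvd_one hdv)
      have hr : p i₀ ∣ r := ((hp i₀).dvd_mul.mp h0).resolve_right hnd
      obtain ⟨s, rfl⟩ := hr
      rw [← C_mul_monomial]
      exact Ideal.mul_mem_right _ _ hCp
    · exact Ideal.mem_sup_right (Ideal.mem_span_singleton.mpr (X_dvd_monomial hm r))

lemma ker_Q [IsDomain R] (p : I → R) (q : R) (hp : ∀ i, Prime (p i)) (hq : Prime q)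
    (hqp : ∀ i, ¬ Associated q (p i))
    (f : MvPolynomial (I × Bool) R) :
    phi (Ideal.Quotient.mk (Ideal.span {q}))
        (fun v => Ideal.Quotient.mk (Ideal.span {q}) (dBase p v)) f = 0 ↔
      f ∈ splitIdeal p ⊔ Ideal.span {C q} := by
  set c := Ideal.Quotient.mk (Ideal.span {q}) with hc
  have hcz : ∀ r : R, c r = 0 ↔ q ∣ r := by
    intro r
    rw [hc, Ideal.Quotient.eq_zero_iff_mem, Ideal.mem_span_singleton]
  have hdp : ∀ i, c (dBase p (i, true)) * c (dBase p (i, false)) = c (p i) := by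
    intro i; simp [dBase]
  refine ker_phi p _ _ _ le_sup_left ?_ ?_ f
  · refine sup_le (phi_gen_zero p _ _ hdp) ?_
    rw [Ideal.span_le]
    rintro g hg
    rw [Set.mem_singleton_iff.mp hg]
    simp only [SetLike.mem_coe, RingHom.mem_ker, phi_C]
    rw [(hcz q).mpr dvd_rfl]
    simp
  · intro m r _ h0
    rw [wt_map, ← map_mul, hcz] at h0
    have hnd : ¬ q ∣ wt (dBase p) m := by
      intro hdvd
      obtain ⟨v, hv, hdvd'⟩ := hq.exists_mem_finset_dvd hdvd
      have hdv := hq.dvd_of_dvd_pow hdvd'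
      obtain ⟨j, b⟩ := v
      cases b
      · rw [show dBase p (j, false) = p j from rfl] at hdv
        exact hqp j (hq.associated_of_dvd (hp j) hdv)
      · rw [show dBase p (j, true) = 1 from rfl] at hdv
        exact hq.not_unit (isUnit_of_dvd_one hdv)
    have hr : q ∣ r := (hq.dvd_mul.mp h0).resolve_right hnd
    obtain ⟨s, rfl⟩ := hr
    rw [← C_mul_monomial]
    exact Ideal.mul_mem_right _ _ (Ideal.mem_sup_right (Ideal.subset_span rfl))


section Units

variable {G S : Type*} [AddCommGroup G] [LinearOrder G] [IsOrderedAddMonoid G] [CommRing S]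


lemma mul_apply_max (a b : AddMonoidAlgebra S G) {xa xb : G}
    (hxa : ∀ x ∈ a.coeff.support, x ≤ xa) (hxb : ∀ x ∈ b.coeff.support, x ≤ xb) :
    (a * b).coeff (xa + xb) = a.coeff xa * b.coeff xb := by
  classical
  rw [AddMonoidAlgebra.coeff_mul, Finsupp.sum]
  rw [Finset.sum_eq_single xa]
  · rw [Finsupp.sum, Finset.sum_eq_single xb]
    · rw [if_pos rfl]
    · intro y hy hyne
      exact if_neg fun he => hyne (add_left_cancel he)
    · intro hxb0
      rw [Finsupp.notMem_support_iff.mp hxb0, mul_zero, if_pos rfl]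
  · intro x hx hxne
    refine Finset.sum_eq_zero fun y hy => if_neg fun he => ?_
    have h1 : x < xa := lt_of_le_of_ne (hxa x hx) hxne
    exact absurd he (by exact ne_of_lt (add_lt_add_of_lt_of_le h1 (hxb y hy)))
  · intro hxa0
    refine Finset.sum_eq_zero fun y hy => ?_
    simp [Finsupp.notMem_support_iff.mp hxa0]

lemma mul_apply_min (a b : AddMonoidAlgebra S G) {xa xb : G}
    (hxa : ∀ x ∈ a.coeff.support, xa ≤ x) (hxb : ∀ x ∈ b.coeff.support, xb ≤ x) :
    (a * b).coeff (xa + xb) = a.coeff xa * b.coeff xb := by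
  classical
  rw [AddMonoidAlgebra.coeff_mul, Finsupp.sum]
  rw [Finset.sum_eq_single xa]
  · rw [Finsupp.sum, Finset.sum_eq_single xb]
    · rw [if_pos rfl]
    · intro y hy hyne
      exact if_neg fun he => hyne (add_left_cancel he)
    · intro hxb0
      rw [Finsupp.notMem_support_iff.mp hxb0, mul_zero, if_pos rfl]
  · intro x hx hxne
    refine Finset.sum_eq_zero fun y hy => if_neg fun he => ?_
    have h1 : xa < x := lt_of_le_of_ne (hxa x hx) (Ne.symm hxne)
    exact absurd he (by exact ne_of_gt (add_lt_add_of_lt_of_le h1 (hxb y hy)))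
  · intro hxa0
    refine Finset.sum_eq_zero fun y hy => ?_
    simp [Finsupp.notMem_support_iff.mp hxa0]

lemma units_single [IsDomain S] {a b : AddMonoidAlgebra S G} (h : a * b = 1) :
    ∃ (ga gb : G) (ua ub : S), ga + gb = 0 ∧ ua * ub = 1 ∧
      a = AddMonoidAlgebra.single ga ua ∧ b = AddMonoidAlgebra.single gb ub := by
  classical
  have ha : a ≠ 0 := by
    rintro rfl
    rw [zero_mul] at h
    have := congrArg (fun z => z.coeff (0 : G)) h
    simp [AddMonoidAlgebra.one_def] at this
  have hb : b ≠ 0 := by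
    rintro rfl
    rw [mul_zero] at h
    have := congrArg (fun z => z.coeff (0 : G)) h
    simp [AddMonoidAlgebra.one_def] at this
  have hsa : a.coeff.support.Nonempty :=
    Finsupp.support_nonempty_iff.mpr fun h0 => ha (AddMonoidAlgebra.coeff_eq_zero.mp h0)
  have hsb : b.coeff.support.Nonempty :=
    Finsupp.support_nonempty_iff.mpr fun h0 => hb (AddMonoidAlgebra.coeff_eq_zero.mp h0)
  set ma := a.coeff.support.max' hsa with hma
  set mb := b.coeff.support.max' hsb with hmb
  set na := a.coeff.support.min' hsa with hna
  set nb := b.coeff.support.min' hsb with hnb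
  have hama : a.coeff ma ≠ 0 := Finsupp.mem_support_iff.mp (a.coeff.support.max'_mem hsa)
  have hbmb : b.coeff mb ≠ 0 := Finsupp.mem_support_iff.mp (b.coeff.support.max'_mem hsb)
  have hana : a.coeff na ≠ 0 := Finsupp.mem_support_iff.mp (a.coeff.support.min'_mem hsa)
  have hbnb : b.coeff nb ≠ 0 := Finsupp.mem_support_iff.mp (b.coeff.support.min'_mem hsb)
  have e1 : (a * b).coeff (ma + mb) = a.coeff ma * b.coeff mb :=
    mul_apply_max a b (fun x hx => Finset.le_max' _ x hx) (fun x hx => Finset.le_max' _ x hx)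
  have e2 : (a * b).coeff (na + nb) = a.coeff na * b.coeff nb :=
    mul_apply_min a b (fun x hx => Finset.min'_le _ x hx) (fun x hx => Finset.min'_le _ x hx)
  have hm0 : ma + mb = 0 := by
    by_contra hc
    rw [h, AddMonoidAlgebra.one_def, AddMonoidAlgebra.coeff_single, Finsupp.single_apply, if_neg fun he => hc he.symm] at e1
    exact mul_ne_zero hama hbmb e1.symm
  have hn0 : na + nb = 0 := by
    by_contra hc
    rw [h, AddMonoidAlgebra.one_def, AddMonoidAlgebra.coeff_single, Finsupp.single_apply, if_neg fun he => hc he.symm] at e2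
    exact mul_ne_zero hana hbnb e2.symm
  have hle_a : na ≤ ma := Finset.min'_le _ _ (a.coeff.support.max'_mem hsa)
  have hle_b : nb ≤ mb := Finset.min'_le _ _ (b.coeff.support.max'_mem hsb)
  have hna_ma : ma = na := by
    refine le_antisymm ?_ hle_a
    have h1 : ma + nb ≤ ma + mb := add_le_add_right hle_b ma
    rw [hm0, ← hn0] at h1
    exact le_of_add_le_add_right h1
  have hnb_mb : mb = nb := by
    refine le_antisymm ?_ hle_b
    have h1 : na + mb ≤ ma + mb := add_le_add_left hle_a mb
    rw [hm0, ← hn0] at h1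
    exact le_of_add_le_add_left h1
  have hsa1 : a.coeff.support ⊆ {ma} := by
    intro x hx
    rw [Finset.mem_singleton]
    exact le_antisymm (Finset.le_max' _ x hx) (hna_ma ▸ Finset.min'_le _ x hx)
  have hsb1 : b.coeff.support ⊆ {mb} := by
    intro x hx
    rw [Finset.mem_singleton]
    exact le_antisymm (Finset.le_max' _ x hx) (hnb_mb ▸ Finset.min'_le _ x hx)
  have hua : a.coeff ma * b.coeff mb = 1 := by
    rw [← e1, h, AddMonoidAlgebra.one_def, AddMonoidAlgebra.coeff_single, Finsupp.single_apply,
      if_pos hm0.symm]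
  exact ⟨ma, mb, a.coeff ma, b.coeff mb, hm0, hua,
    AddMonoidAlgebra.coeff_injective (Finsupp.support_subset_singleton.mp hsa1),
    AddMonoidAlgebra.coeff_injective (Finsupp.support_subset_singleton.mp hsb1)⟩

end Units

lemma dvd_mk_iff {A : Type*} [CommRing A] (J : Ideal A) (a f : A) :
    Ideal.Quotient.mk J a ∣ Ideal.Quotient.mk J f ↔ f ∈ J ⊔ Ideal.span {a} := by
  constructor
  · rintro ⟨z, hz⟩
    obtain ⟨g, rfl⟩ := Ideal.Quotient.mk_surjective z
    rw [← map_mul, Ideal.Quotient.mk_eq_mk_iff_sub_mem] at hz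
    have he : f = (f - a * g) + a * g := by ring
    rw [he]
    exact Ideal.add_mem _ (Ideal.mem_sup_left hz)
      (Ideal.mem_sup_right (Ideal.mem_span_singleton.mpr ⟨g, rfl⟩))
  · intro hf
    obtain ⟨s, hs, t, ht, rfl⟩ := Submodule.mem_sup.mp hf
    obtain ⟨g, rfl⟩ := Ideal.mem_span_singleton.mp ht
    refine ⟨Ideal.Quotient.mk J g, ?_⟩
    rw [map_add, Ideal.Quotient.eq_zero_iff_mem.mpr hs, zero_add, map_mul]

lemma prime_mk {A L : Type*} [CommRing A] [CommRing L] [Nontrivial L] [NoZeroDivisors L]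
    (J : Ideal A) (a : A) (Φ : A →+* L)
    (hker : ∀ f, Φ f = 0 ↔ f ∈ J ⊔ Ideal.span {a}) (ha : a ∉ J) :
    Prime (Ideal.Quotient.mk J a) := by
  refine ⟨?_, ?_, ?_⟩
  · rw [Ne, Ideal.Quotient.eq_zero_iff_mem]; exact ha
  · intro hu
    have h1 : (Ideal.Quotient.mk J a) ∣ Ideal.Quotient.mk J 1 := by
      rw [map_one]; exact hu.dvd
    rw [dvd_mk_iff, ← hker, map_one] at h1
    exact one_ne_zero h1
  · intro x y hxy
    obtain ⟨g1, rfl⟩ := Ideal.Quotient.mk_surjective x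
    obtain ⟨g2, rfl⟩ := Ideal.Quotient.mk_surjective y
    rw [← map_mul, dvd_mk_iff, ← hker, map_mul] at hxy
    rcases mul_eq_zero.mp hxy with h | h
    · exact Or.inl (by rw [dvd_mk_iff, ← hker]; exact h)
    · exact Or.inr (by rw [dvd_mk_iff, ← hker]; exact h)

end

end Stmt12Aux

open Stmt12Aux

/-- In `R' = R[xᵢ, yᵢ]/(xᵢ yᵢ - pᵢ)` over a UFD `R` with pairwise nonassociate
primes `pᵢ`: each `sᵢ` and `sᵢ'` is prime; `sᵢ` is not associate to `sᵢ'`, nor to `sⱼ` or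
`sⱼ'` for `j ≠ i`; any prime `q` of `R` not associate to any `pᵢ` stays prime and is not
associate to any `sᵢ` or `sᵢ'`; and `U(R') = U(R)`. -/
theorem stmt12 (R : Type*) [CommRing R] [IsDomain R] [UniqueFactorizationMonoid R]
    (I : Type*) (p : I → R) (hp : ∀ i, Prime (p i))
    (hnonassoc : ∀ i j, i ≠ j → ¬ Associated (p i) (p j)) :
    (∀ i : I, Prime ((Ideal.Quotient.mk (splitIdeal p)) (X (i, true))) ∧
      Prime ((Ideal.Quotient.mk (splitIdeal p)) (X (i, false)))) ∧
    (∀ i : I, ¬ Associated ((Ideal.Quotient.mk (splitIdeal p)) (X (i, true)))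
      ((Ideal.Quotient.mk (splitIdeal p)) (X (i, false)))) ∧
    (∀ i j : I, i ≠ j →
      ¬ Associated ((Ideal.Quotient.mk (splitIdeal p)) (X (i, true)))
        ((Ideal.Quotient.mk (splitIdeal p)) (X (j, true))) ∧
      ¬ Associated ((Ideal.Quotient.mk (splitIdeal p)) (X (i, true)))
        ((Ideal.Quotient.mk (splitIdeal p)) (X (j, false)))) ∧
    (∀ q : R, Prime q → (∀ i, ¬ Associated q (p i)) →
      Prime ((Ideal.Quotient.mk (splitIdeal p)) (C q)) ∧
      ∀ i : I, ¬ Associated ((Ideal.Quotient.mk (splitIdeal p)) (C q))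
          ((Ideal.Quotient.mk (splitIdeal p)) (X (i, true))) ∧
        ¬ Associated ((Ideal.Quotient.mk (splitIdeal p)) (C q))
          ((Ideal.Quotient.mk (splitIdeal p)) (X (i, false)))) ∧
    (∀ a : MvPolynomial (I × Bool) R ⧸ splitIdeal p,
      IsUnit a ↔ ∃ r : R, IsUnit r ∧ (Ideal.Quotient.mk (splitIdeal p)) (C r) = a) := by
  classical
  have hp0 : ∀ i, p i ≠ 0 := fun i => (hp i).ne_zero
  set Φ₁ := phi (RingHom.id R) (dBase p) with hΦ₁
  have hker1 : ∀ f, Φ₁ f = 0 ↔ f ∈ splitIdeal p := ker_base p hp0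
  have hdne : ∀ v : I × Bool, dBase p v ≠ 0 := by
    rintro ⟨j, b⟩
    cases b <;> simp [dBase, hp0 j]
  have hXnotmem : ∀ v : I × Bool, (X v : MvPolynomial (I × Bool) R) ∉ splitIdeal p := by
    intro v hv
    have h1 := (hker1 _).mpr hv
    rw [phi_X] at h1
    exact hdne v (by simpa [Finsupp.single_eq_zero] using h1)
  -- the units characterization
  have hunits : ∀ a : MvPolynomial (I × Bool) R ⧸ splitIdeal p,
      IsUnit a ↔ ∃ r : R, IsUnit r ∧ (Ideal.Quotient.mk (splitIdeal p)) (C r) = a := by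
    intro a
    constructor
    · intro ha
      obtain ⟨f, rfl⟩ := Ideal.Quotient.mk_surjective a
      obtain ⟨binv, hb⟩ := isUnit_iff_exists_inv.mp ha
      obtain ⟨g, rfl⟩ := Ideal.Quotient.mk_surjective binv
      have h1 : f * g - 1 ∈ splitIdeal p := by
        rw [← Ideal.Quotient.eq_zero_iff_mem, map_sub, map_mul, map_one, sub_eq_zero]
        exact hb
      have h2 : Φ₁ f * Φ₁ g = 1 := by
        have h3 : Φ₁ (f * g - 1) = 0 := (hker1 _).mpr h1
        rw [map_sub, map_mul, map_one, sub_eq_zero] at h3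
        exact h3
      letI : LinearOrder I := IsWellOrder.linearOrder WellOrderingRel
      obtain ⟨ga, gb, ua, ub, hgab, huab, hfa, hgb⟩ :=
        units_single (G := Lex (I →₀ ℤ)) h2
      have hpos : ∀ (f' : MvPolynomial (I × Bool) R) (t : I →₀ ℤ) (u : R),
          Φ₁ f' = AddMonoidAlgebra.single t u → IsUnit u → ∀ j, 0 ≤ t j := by
        intro f' t u hft hu j
        obtain ⟨T, ρ, hTred, hmem⟩ := normal p f'
        have hs : Φ₁ (∑ m ∈ T, monomial m (ρ m)) = AddMonoidAlgebra.single t u := by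
          have h3 : Φ₁ (f' - ∑ m ∈ T, monomial m (ρ m)) = 0 := (hker1 _).mpr hmem
          rw [map_sub, hft, sub_eq_zero] at h3
          exact h3.symm
        rw [map_sum, hΦ₁] at hs
        simp only [phi_monomial, RingHom.id_apply] at hs
        have happ := congrArg (fun z => z.coeff t) hs
        simp only [AddMonoidAlgebra.coeff_sum, AddMonoidAlgebra.coeff_single,
          Finsupp.single_eq_same] at happ
        rw [Finsupp.finset_sum_apply] at happ
        by_cases hex : ∃ n ∈ T, expMap n = t
        · obtain ⟨n, hn, hnt⟩ := hex
          rw [Finset.sum_eq_single_of_mem n hn (fun m hm hmn =>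
            by rw [Finsupp.single_apply, if_neg (fun he => hmn
              (expMap_inj (hTred m hm) (hTred n hn) (he.trans hnt.symm)))])] at happ
          rw [Finsupp.single_apply, if_pos hnt] at happ
          have hwtu : IsUnit (wt (dBase p) n) := by
            have hu' := hu
            rw [← happ] at hu'
            exact isUnit_of_mul_isUnit_right hu'
          have hfalse : ∀ i, n (i, false) = 0 := by
            intro i
            by_contra hnz
            have hdvd : p i ∣ wt (dBase p) n := by
              have h5 : dBase p (i, false) ^ n (i, false) ∣ wt (dBase p) n :=
                Finset.dvd_prod_of_mem _ (Finsupp.mem_support_iff.mpr hnz)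
              exact dvd_trans (dvd_pow_self (dBase p (i, false)) hnz) h5
            exact (hp i).not_unit (isUnit_of_dvd_unit hdvd hwtu)
          have h6 := expMap_apply n j
          rw [hnt] at h6
          rw [h6, hfalse j]
          omega
        · rw [Finset.sum_eq_zero (fun m hm => by
            rw [Finsupp.single_apply, if_neg (fun he => hex ⟨m, hm, he⟩)])] at happ
          exact absurd happ.symm (hu.ne_zero)
      have hfa' : Φ₁ f = AddMonoidAlgebra.single (ofLex ga) ua := hfa
      have hgb2 : Φ₁ g = AddMonoidAlgebra.single (ofLex gb) ub := hgb
      have hgab' : ofLex ga + ofLex gb = (0 : I →₀ ℤ) := hgab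
      have hga : ∀ j, 0 ≤ ofLex ga j :=
        hpos f (ofLex ga) ua hfa' (IsUnit.of_mul_eq_one _ huab)
      have hgb' : ∀ j, 0 ≤ ofLex gb j :=
        hpos g (ofLex gb) ub hgb2 (IsUnit.of_mul_eq_one _ (mul_comm ua ub ▸ huab))
      have hga0 : ofLex ga = 0 := by
        ext j
        have h6 := congrArg (fun z => z j) hgab'
        simp only [Finsupp.add_apply, Finsupp.coe_zero, Pi.zero_apply] at h6
        have h7 := hga j
        have h8 := hgb' j
        simp only [Finsupp.coe_zero, Pi.zero_apply]
        omega
      refine ⟨ua, IsUnit.of_mul_eq_one _ huab, ?_⟩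
      have h7 : Φ₁ (C ua - f) = 0 := by
        rw [map_sub, phi_C, hfa', hga0, RingHom.id_apply, sub_eq_zero]
      exact (Ideal.Quotient.mk_eq_mk_iff_sub_mem _ _).mpr ((hker1 _).mp h7)
    · rintro ⟨r, hr, rfl⟩
      exact (hr.map (C : R →+* MvPolynomial (I × Bool) R)).map (Ideal.Quotient.mk (splitIdeal p))
  -- associated elements differ by a constant unit
  have hassoc : ∀ a b : MvPolynomial (I × Bool) R,
      Associated (Ideal.Quotient.mk (splitIdeal p) a) (Ideal.Quotient.mk (splitIdeal p) b) →
      ∃ r : R, IsUnit r ∧ Φ₁ a * AddMonoidAlgebra.single 0 r = Φ₁ b := by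
    intro a b hab
    obtain ⟨U, hU⟩ := hab
    obtain ⟨r, hr, hCr⟩ := (hunits U.val).mp U.isUnit
    refine ⟨r, hr, ?_⟩
    have h1 : Ideal.Quotient.mk (splitIdeal p) (a * C r) =
        Ideal.Quotient.mk (splitIdeal p) b := by
      rw [map_mul, hCr, hU]
    have h2 : Φ₁ (a * C r - b) = 0 :=
      (hker1 _).mpr ((Ideal.Quotient.mk_eq_mk_iff_sub_mem _ _).mp h1)
    rw [map_sub, map_mul, phi_C, sub_eq_zero, RingHom.id_apply] at h2
    exact h2
  have hsingle_ne : ∀ (g₁ g₂ : I →₀ ℤ) (u₁ u₂ : R), g₁ ≠ g₂ → u₁ ≠ 0 → u₂ ≠ 0 →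
      (AddMonoidAlgebra.single g₁ u₁ : AddMonoidAlgebra R (I →₀ ℤ)) ≠
        AddMonoidAlgebra.single g₂ u₂ := by
    intro g₁ g₂ u₁ u₂ hg hu₁ hu₂ he
    rcases AddMonoidAlgebra.single_inj.mp he with ⟨h1, _⟩ | ⟨h1, _⟩
    exacts [hg h1, hu₁ h1]
  -- group element inequalities
  have hsne1 : ∀ i : I, (Finsupp.single i 1 : I →₀ ℤ) ≠ -Finsupp.single i 1 := by
    intro i he
    have := congrArg (fun z => z i) he
    simp [Finsupp.single_apply] at this
  have hsne2 : ∀ i j : I, i ≠ j → (Finsupp.single i 1 : I →₀ ℤ) ≠ Finsupp.single j 1 := by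
    intro i j hij he
    have hji : ¬ j = i := fun h => hij h.symm
    have := congrArg (fun z => z i) he
    simp [Finsupp.single_apply, hji] at this
  have hsne3 : ∀ i j : I, (Finsupp.single i 1 : I →₀ ℤ) ≠ -Finsupp.single j 1 := by
    intro i j he
    have := congrArg (fun z => z i) he
    rcases eq_or_ne j i with rfl | hji
    · simp [Finsupp.single_apply] at this
    · simp [Finsupp.single_apply, hji] at this
  have hsne4 : ∀ i : I, (0 : I →₀ ℤ) ≠ Finsupp.single i 1 := by
    intro i he
    have := congrArg (fun z => z i) he
    simp [Finsupp.single_apply] at this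
  have hsne5 : ∀ i : I, (0 : I →₀ ℤ) ≠ -Finsupp.single i 1 := by
    intro i he
    have := congrArg (fun z => z i) he
    simp [Finsupp.single_apply] at this
  have hggt : ∀ i : I, gg (i, true) = Finsupp.single i 1 := fun i => rfl
  have hggf : ∀ i : I, gg (i, false) = -Finsupp.single i 1 := fun i => rfl
  have hdbt : ∀ i : I, dBase p (i, true) = 1 := fun i => rfl
  have hdbf : ∀ i : I, dBase p (i, false) = p i := fun i => rfl
  refine ⟨?_, ?_, ?_, ?_, hunits⟩
  · -- primality of the sᵢ and sᵢ'
    intro i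
    haveI hPi : (Ideal.span {p i}).IsPrime :=
      (Ideal.span_singleton_prime (hp0 i)).mpr (hp i)
    constructor
    · exact prime_mk _ _ _ (fun f => ker_S p i true hp hnonassoc f) (hXnotmem (i, true))
    · exact prime_mk _ _ _ (fun f => ker_S p i false hp hnonassoc f) (hXnotmem (i, false))
  · -- sᵢ not associated to sᵢ'
    intro i hA
    obtain ⟨r, hr, he⟩ := hassoc _ _ hA
    rw [phi_X, phi_X, AddMonoidAlgebra.single_mul_single, add_zero, hggt, hggf,
      hdbt, hdbf, one_mul] at he
    exact hsingle_ne _ _ _ _ (hsne3 i i) hr.ne_zero (hp0 i) he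
  · -- sᵢ not associated to sⱼ or sⱼ'
    intro i j hij
    constructor
    · intro hA
      obtain ⟨r, hr, he⟩ := hassoc _ _ hA
      rw [phi_X, phi_X, AddMonoidAlgebra.single_mul_single, add_zero, hggt, hggt,
        hdbt, hdbt, one_mul] at he
      exact hsingle_ne _ _ _ _ (hsne2 i j hij) hr.ne_zero one_ne_zero he
    · intro hA
      obtain ⟨r, hr, he⟩ := hassoc _ _ hA
      rw [phi_X, phi_X, AddMonoidAlgebra.single_mul_single, add_zero, hggt, hggf,
        hdbt, hdbf, one_mul] at he
      exact hsingle_ne _ _ _ _ (hsne3 i j) hr.ne_zero (hp0 j) he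
  · -- primes q of R stay prime
    intro q hq hqp
    have hCqnot : (C q : MvPolynomial (I × Bool) R) ∉ splitIdeal p := by
      intro hmem
      have h1 := (hker1 _).mpr hmem
      rw [phi_C, RingHom.id_apply] at h1
      exact hq.ne_zero (by simpa [Finsupp.single_eq_zero] using h1)
    haveI hPq : (Ideal.span {q}).IsPrime :=
      (Ideal.span_singleton_prime hq.ne_zero).mpr hq
    refine ⟨prime_mk _ _ _ (fun f => ker_Q p q hp hq hqp f) hCqnot, ?_⟩
    intro i
    constructor
    · intro hA
      obtain ⟨r, hr, he⟩ := hassoc _ _ hA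
      rw [phi_C, phi_X, AddMonoidAlgebra.single_mul_single, add_zero, hggt,
        hdbt, RingHom.id_apply] at he
      exact hsingle_ne _ _ _ _ (hsne4 i) (mul_ne_zero hq.ne_zero hr.ne_zero) one_ne_zero he
    · intro hA
      obtain ⟨r, hr, he⟩ := hassoc _ _ hA
      rw [phi_C, phi_X, AddMonoidAlgebra.single_mul_single, add_zero, hggf,
        hdbf, RingHom.id_apply] at he
      exact hsingle_ne _ _ _ _ (hsne5 i) (mul_ne_zero hq.ne_zero hr.ne_zero) (hp0 i) he
end

section
/- Let R be a UFD, p prime in R, and R' = R[x,y]/(xy - p) with its ℤ-grading. If a, b ∈ R' satisfy ab = 1, then a and b are homogeneous of grade 0, i.e., a, b ∈ R. -/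
open MvPolynomial

namespace Stmt14Aux

open LaurentPolynomial

set_option linter.unusedSectionVars false

variable {R : Type*} [CommRing R] [IsDomain R]

noncomputable def phi (p : R) : MvPolynomial (Fin 2) R →ₐ[R] LaurentPolynomial R :=
  MvPolynomial.aeval ![T 1, LaurentPolynomial.C p * T (-1)]

noncomputable def Ip (p : R) : Ideal (MvPolynomial (Fin 2) R) :=
  Ideal.span {(X 0 * X 1 - MvPolynomial.C p : MvPolynomial (Fin 2) R)}

/-! ### Units of Laurent polynomial rings over a domain -/

lemma laurent_unit {A B : LaurentPolynomial R} (h : A * B = 1) :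
    ∃ (u : R) (n : ℤ), IsUnit u ∧ A = LaurentPolynomial.C u * T n := by
  obtain ⟨m, F, hF⟩ := exists_T_pow A
  obtain ⟨k, G, hG⟩ := exists_T_pow B
  have hFG : F * G = Polynomial.X ^ (m + k) := by
    apply Polynomial.toLaurent_injective
    rw [map_mul, hF, hG, Polynomial.toLaurent_X_pow, mul_mul_mul_comm, h, one_mul, ← T_add]
    push_cast
    ring_nf
  have hF0 : F ≠ 0 := by
    intro h0
    apply pow_ne_zero (m + k) (Polynomial.X_ne_zero (R := R))
    rw [← hFG, h0, zero_mul]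
  have hG0 : G ≠ 0 := by
    intro h0
    apply pow_ne_zero (m + k) (Polynomial.X_ne_zero (R := R))
    rw [← hFG, h0, mul_zero]
  have hdeg : F.natDegree + G.natDegree = m + k := by
    rw [← Polynomial.natDegree_mul hF0 hG0, hFG, Polynomial.natDegree_X_pow]
  have htdeg : F.natTrailingDegree + G.natTrailingDegree = m + k := by
    rw [← Polynomial.natTrailingDegree_mul hF0 hG0, hFG, Polynomial.natTrailingDegree_X_pow]
  have hFt : F.natTrailingDegree = F.natDegree := by
    have h1 := F.natTrailingDegree_le_natDegree
    have h2 := G.natTrailingDegree_le_natDegree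
    omega
  have hlc : F.leadingCoeff * G.leadingCoeff = 1 := by
    rw [← Polynomial.leadingCoeff_mul, hFG, Polynomial.leadingCoeff_X_pow]
  have hu : IsUnit F.leadingCoeff := IsUnit.of_mul_eq_one _ hlc
  have hFeq : F = Polynomial.C F.leadingCoeff * Polynomial.X ^ F.natDegree := by
    ext n
    rw [Polynomial.coeff_C_mul, Polynomial.coeff_X_pow]
    rcases lt_trichotomy n F.natDegree with hn | hn | hn
    · rw [if_neg hn.ne, mul_zero, Polynomial.coeff_eq_zero_of_lt_natTrailingDegree (by omega)]
    · rw [hn, if_pos rfl, mul_one, Polynomial.coeff_natDegree]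
    · rw [if_neg hn.ne', mul_zero, Polynomial.coeff_eq_zero_of_natDegree_lt hn]
  refine ⟨F.leadingCoeff, (F.natDegree : ℤ) - m, hu, ?_⟩
  have hA : A = Polynomial.toLaurent F * T (-(m : ℤ)) := by
    rw [hF, mul_T_assoc]
    simp
  rw [sub_eq_add_neg, ← mul_T_assoc, ← Polynomial.toLaurent_C_mul_X_pow, ← hFeq]
  exact hA

/-! ### Basic properties of `phi` -/

variable (p : R)

lemma phi_X0 : phi p (X 0) = T 1 := by simp [phi]

lemma phi_X1 : phi p (X 1) = LaurentPolynomial.C p * T (-1) := by simp [phi]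

lemma phi_C (r : R) : phi p (C r) = LaurentPolynomial.C r := by
  simp [phi, ← LaurentPolynomial.C_eq_algebraMap]

lemma phi_rel : phi p (X 0 * X 1 - MvPolynomial.C p) = 0 := by
  rw [map_sub, map_mul, phi_X0, phi_X1, phi_C]
  rw [mul_comm, mul_assoc, ← T_add]
  simp

lemma phi_ker {f : MvPolynomial (Fin 2) R} (hf : f ∈ Ip p) : phi p f = 0 := by
  rw [Ip, Ideal.mem_span_singleton] at hf
  obtain ⟨c, rfl⟩ := hf
  rw [map_mul, phi_rel, zero_mul]

lemma phi_aeval_X0 (g : Polynomial R) :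
    phi p (Polynomial.aeval (X 0) g) = Polynomial.toLaurent g := by
  have : (phi p).comp (Polynomial.aeval (X 0 : MvPolynomial (Fin 2) R)) =
      Polynomial.toLaurentAlg := by
    apply Polynomial.algHom_ext
    simp [phi_X0, Polynomial.toLaurentAlg_apply, Polynomial.toLaurent_X]
  calc phi p (Polynomial.aeval (X 0) g)
      = ((phi p).comp (Polynomial.aeval (X 0 : MvPolynomial (Fin 2) R))) g := rfl
    _ = Polynomial.toLaurent g := by rw [this, Polynomial.toLaurentAlg_apply]

/-! ### Coefficient computations -/

lemma tl_nonneg (g : Polynomial R) (k : ℕ) : (Polynomial.toLaurent g).coeff (k : ℤ) = g.coeff k := by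
  induction g using Polynomial.induction_on' with
  | add f g hf hg => rw [map_add, AddMonoidAlgebra.coeff_add, Finsupp.add_apply, hf, hg, Polynomial.coeff_add]
  | monomial j r =>
      rw [Polynomial.toLaurent_C_mul_T,
        ← single_eq_C_mul_T, Polynomial.coeff_monomial, AddMonoidAlgebra.coeff_single, Finsupp.single_apply]
      by_cases hjk : j = k
      · simp [hjk]
      · rw [if_neg (by exact_mod_cast hjk), if_neg hjk]

lemma tl_neg (g : Polynomial R) (k : ℕ) (hk : 0 < k) :
    (Polynomial.toLaurent g).coeff (-(k : ℤ)) = 0 := by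
  induction g using Polynomial.induction_on' with
  | add f g hf hg => rw [map_add, AddMonoidAlgebra.coeff_add, Finsupp.add_apply, hf, hg, add_zero]
  | monomial j r =>
      rw [Polynomial.toLaurent_C_mul_T,
        ← single_eq_C_mul_T, AddMonoidAlgebra.coeff_single, Finsupp.single_apply]
      rw [if_neg (by omega)]

lemma tau_single (j : ℕ) (r : R) :
    phi p (Polynomial.aeval (X 1) (Polynomial.monomial j r)) =
      AddMonoidAlgebra.single (-(j : ℤ)) (r * p ^ j) := by
  rw [Polynomial.aeval_monomial, map_mul, map_pow, phi_X1]
  have : algebraMap R (MvPolynomial (Fin 2) R) r = MvPolynomial.C r := rfl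
  have hjj : (j : ℤ) * -1 = -(j : ℤ) := by ring
  rw [this, phi_C, mul_pow, ← map_pow, T_pow, hjj, single_eq_C_mul_T, map_mul, mul_assoc]

lemma tau_neg (h : Polynomial R) (k : ℕ) :
    (phi p (Polynomial.aeval (X 1) h)).coeff (-(k : ℤ)) = h.coeff k * p ^ k := by
  induction h using Polynomial.induction_on' with
  | add f g hf hg => rw [map_add, map_add, AddMonoidAlgebra.coeff_add, Finsupp.add_apply, hf, hg, Polynomial.coeff_add,
      add_mul]
  | monomial j r =>
      rw [tau_single, AddMonoidAlgebra.coeff_single, Finsupp.single_apply, Polynomial.coeff_monomial]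
      by_cases hjk : j = k
      · simp [hjk]
      · rw [if_neg (by omega), if_neg hjk, zero_mul]

lemma tau_pos (h : Polynomial R) (k : ℕ) (hk : 0 < k) :
    (phi p (Polynomial.aeval (X 1) h)).coeff (k : ℤ) = 0 := by
  induction h using Polynomial.induction_on' with
  | add f g hf hg => rw [map_add, map_add, AddMonoidAlgebra.coeff_add, Finsupp.add_apply, hf, hg, add_zero]
  | monomial j r =>
      rw [tau_single, AddMonoidAlgebra.coeff_single, Finsupp.single_apply, if_neg (by omega)]

/-- Negative coefficients of anything in the image of `phi` are divisible by powers of `p`. -/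
lemma phi_dvd (f : MvPolynomial (Fin 2) R) (k : ℕ) : p ^ k ∣ (phi p f).coeff (-(k : ℤ)) := by
  induction f using MvPolynomial.induction_on generalizing k with
  | C r =>
      have hCr : (LaurentPolynomial.C r : LaurentPolynomial R) = AddMonoidAlgebra.single (0 : ℤ) r := rfl
      rw [phi_C, hCr, AddMonoidAlgebra.coeff_single, Finsupp.single_apply]
      rcases k with _ | k
      · rw [pow_zero]; exact one_dvd _
      · rw [if_neg (by omega)]
        exact dvd_zero _
  | add f g hf hg => rw [map_add, AddMonoidAlgebra.coeff_add, Finsupp.add_apply]; exact dvd_add (hf k) (hg k)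
  | mul_X f i hf =>
      obtain ⟨iv, hiv⟩ := i
      interval_cases iv
      · simp only [Fin.mk_zero]
        rw [map_mul, phi_X0]
        have hT : (T 1 : LaurentPolynomial R) = AddMonoidAlgebra.single (1 : ℤ) 1 := rfl
        rw [hT, AddMonoidAlgebra.coeff_mul_single_apply, mul_one]
        have h2 : (-(k : ℤ) + -1) = -((k+1 : ℕ) : ℤ) := by push_cast; ring
        rw [h2]
        exact dvd_trans (pow_dvd_pow p (Nat.le_succ k)) (hf (k + 1))
      · simp only [Fin.mk_one]
        rw [map_mul, phi_X1]
        have hre : phi p f * (LaurentPolynomial.C p * T (-1)) =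
            phi p f * T (-1) * LaurentPolynomial.C p := by ring
        rw [hre]
        have hC : (LaurentPolynomial.C p : LaurentPolynomial R) = AddMonoidAlgebra.single (0 : ℤ) p := rfl
        have hT : (T (-1) : LaurentPolynomial R) = AddMonoidAlgebra.single (-1 : ℤ) 1 := rfl
        rw [hC]
        rw [AddMonoidAlgebra.coeff_mul_single_apply]
        rw [hT]
        rw [AddMonoidAlgebra.coeff_mul_single_apply]
        rw [mul_one]
        rcases k with _ | k
        · rw [pow_zero]; exact one_dvd _
        · have : (-((k+1 : ℕ) : ℤ) + -0 + - -1) = -((k : ℕ) : ℤ) := by push_cast; ring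
          rw [this, pow_succ]
          exact mul_dvd_mul (hf k) dvd_rfl

/-! ### Normal form in the quotient -/

lemma SLx (h : Polynomial R) (h0 : h.coeff 0 = 0) :
    ∃ g2 h2 : Polynomial R, h2.coeff 0 = 0 ∧
      Ideal.Quotient.mk (Ip p) (Polynomial.aeval (X 1) h * X 0) =
        Ideal.Quotient.mk (Ip p) (Polynomial.aeval (X 0) g2) +
          Ideal.Quotient.mk (Ip p) (Polynomial.aeval (X 1) h2) := by
  have hh : h = h.divX * Polynomial.X := by
    conv_lhs => rw [← h.divX_mul_X_add]
    rw [h0, map_zero, add_zero]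
  refine ⟨Polynomial.C (p * h.divX.coeff 0),
    Polynomial.C p * (h.divX - Polynomial.C (h.divX.coeff 0)), by simp, ?_⟩
  have step1 : Ideal.Quotient.mk (Ip p) (Polynomial.aeval (X 1) h * X 0) =
      Ideal.Quotient.mk (Ip p) (MvPolynomial.C p * Polynomial.aeval (X 1) h.divX) := by
    rw [Ideal.Quotient.eq, Ip, Ideal.mem_span_singleton]
    refine ⟨Polynomial.aeval (X 1) h.divX, ?_⟩
    nth_rewrite 1 [hh]
    rw [map_mul, Polynomial.aeval_X]
    ring
  rw [step1, ← map_add]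
  refine congrArg _ ?_
  simp only [map_mul, map_sub, Polynomial.aeval_C, MvPolynomial.algebraMap_eq]
  ring

lemma SLy (g : Polynomial R) :
    ∃ g2 h2 : Polynomial R, h2.coeff 0 = 0 ∧
      Ideal.Quotient.mk (Ip p) (Polynomial.aeval (X 0) g * X 1) =
        Ideal.Quotient.mk (Ip p) (Polynomial.aeval (X 0) g2) +
          Ideal.Quotient.mk (Ip p) (Polynomial.aeval (X 1) h2) := by
  refine ⟨Polynomial.C p * g.divX, Polynomial.C (g.coeff 0) * Polynomial.X, by simp, ?_⟩
  have step1 : Ideal.Quotient.mk (Ip p) (Polynomial.aeval (X 0) g * X 1) =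
      Ideal.Quotient.mk (Ip p)
        (MvPolynomial.C p * Polynomial.aeval (X 0) g.divX + MvPolynomial.C (g.coeff 0) * X 1) := by
    rw [Ideal.Quotient.eq, Ip, Ideal.mem_span_singleton]
    refine ⟨Polynomial.aeval (X 0) g.divX, ?_⟩
    nth_rewrite 1 [← g.divX_mul_X_add]
    rw [map_add, map_mul, Polynomial.aeval_X, Polynomial.aeval_C, MvPolynomial.algebraMap_eq]
    ring
  rw [step1, ← map_add]
  refine congrArg _ ?_
  simp only [map_mul, Polynomial.aeval_C, MvPolynomial.algebraMap_eq, Polynomial.aeval_X]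

lemma normal (f : MvPolynomial (Fin 2) R) :
    ∃ g h : Polynomial R, h.coeff 0 = 0 ∧
      Ideal.Quotient.mk (Ip p) f =
        Ideal.Quotient.mk (Ip p) (Polynomial.aeval (X 0) g) +
          Ideal.Quotient.mk (Ip p) (Polynomial.aeval (X 1) h) := by
  induction f using MvPolynomial.induction_on with
  | C a =>
      refine ⟨Polynomial.C a, 0, by simp, ?_⟩
      simp [MvPolynomial.algebraMap_eq]
  | add f1 f2 hf1 hf2 =>
      obtain ⟨g1, h1, h10, e1⟩ := hf1
      obtain ⟨g2, h2, h20, e2⟩ := hf2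
      refine ⟨g1 + g2, h1 + h2, by simp [h10, h20], ?_⟩
      rw [map_add, e1, e2, map_add, map_add, map_add, map_add]
      ring
  | mul_X f i hf =>
      obtain ⟨g, h, h0, e⟩ := hf
      obtain ⟨iv, hiv⟩ := i
      interval_cases iv
      · simp only [Fin.mk_zero]
        obtain ⟨g2, h2, h20, hx⟩ := SLx p h h0
        refine ⟨g * Polynomial.X + g2, h2, h20, ?_⟩
        have e1 : Ideal.Quotient.mk (Ip p) (f * X 0) =
            Ideal.Quotient.mk (Ip p) (Polynomial.aeval (X 0) g * X 0) +
              Ideal.Quotient.mk (Ip p) (Polynomial.aeval (X 1) h * X 0) := by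
          rw [map_mul, e, add_mul, ← map_mul, ← map_mul, map_mul]
        rw [e1, hx]
        have e2 : Polynomial.aeval (X 0 : MvPolynomial (Fin 2) R) (g * Polynomial.X + g2) =
            Polynomial.aeval (X 0) g * X 0 + Polynomial.aeval (X 0) g2 := by simp
        rw [e2, map_add]
        ring
      · simp only [Fin.mk_one]
        obtain ⟨g2, h2, h20, hy⟩ := SLy p g
        refine ⟨g2, h * Polynomial.X + h2, by simp [h20], ?_⟩
        have e1 : Ideal.Quotient.mk (Ip p) (f * X 1) =
            Ideal.Quotient.mk (Ip p) (Polynomial.aeval (X 0) g * X 1) +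
              Ideal.Quotient.mk (Ip p) (Polynomial.aeval (X 1) h * X 1) := by
          rw [map_mul, e, add_mul, ← map_mul, ← map_mul, map_mul]
        rw [e1, hy]
        have e2 : Polynomial.aeval (X 1 : MvPolynomial (Fin 2) R) (h * Polynomial.X + h2) =
            Polynomial.aeval (X 1) h * X 1 + Polynomial.aeval (X 1) h2 := by simp
        rw [e2, map_add]
        ring

/-! ### The main arguments -/

lemma grade_zero (hp : Prime p) {fa fb : MvPolynomial (Fin 2) R}
    (h : phi p fa * phi p fb = 1) : ∃ u : R, phi p fa = LaurentPolynomial.C u := by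
  obtain ⟨u, n, hu, hA⟩ := laurent_unit h
  obtain ⟨v, m, hv, hB⟩ := laurent_unit (show phi p fb * phi p fa = 1 by rw [mul_comm]; exact h)
  have hsingle : AddMonoidAlgebra.single (n + m) (u * v) = AddMonoidAlgebra.single (0 : ℤ) (1 : R) := by
    calc AddMonoidAlgebra.single (n + m) (u * v) = phi p fa * phi p fb := by
          rw [hA, hB, single_eq_C_mul_T, map_mul, T_add]
          ring
      _ = 1 := h
      _ = AddMonoidAlgebra.single (0 : ℤ) (1 : R) := single_zero_one_eq_one.symm
  have hnm : n + m = 0 := by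
    rcases AddMonoidAlgebra.single_inj.mp hsingle with ⟨h1, _⟩ | ⟨h1, _⟩
    · exact h1
    · exact absurd h1 (hu.mul hv).ne_zero
  have keyneg : ∀ (f : MvPolynomial (Fin 2) R) (w : R) (j : ℤ),
      IsUnit w → phi p f = LaurentPolynomial.C w * T j → 0 ≤ j := by
    intro f w j hw hf
    by_contra hj
    push_neg at hj
    have hdvd := phi_dvd p f (-j).toNat
    have hjj : -(((-j).toNat : ℕ) : ℤ) = j := by omega
    rw [hf, hjj, ← single_eq_C_mul_T] at hdvd
    simp only [AddMonoidAlgebra.coeff_single, Finsupp.single_eq_same] at hdvd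
    have hpw : p ∣ w := dvd_trans (dvd_pow_self p (by omega : (-j).toNat ≠ 0)) hdvd
    exact hp.not_unit (isUnit_of_dvd_unit hpw hw)
  have hn : 0 ≤ n := keyneg fa u n hu hA
  have hm : 0 ≤ m := keyneg fb v m hv hB
  have hn0 : n = 0 := by omega
  exact ⟨u, by rw [hA, hn0, T_zero, mul_one]⟩

lemma eq_C_of_phi_eq_C (hp0 : p ≠ 0) {f : MvPolynomial (Fin 2) R} {u : R}
    (hf : phi p f = LaurentPolynomial.C u) :
    Ideal.Quotient.mk (Ip p) f = Ideal.Quotient.mk (Ip p) (MvPolynomial.C u) := by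
  obtain ⟨g, h, h0, hnf⟩ := normal p f
  have hmem : f - (Polynomial.aeval (X 0) g + Polynomial.aeval (X 1) h) ∈ Ip p := by
    rw [← Ideal.Quotient.eq, hnf, map_add]
  have hphi : Polynomial.toLaurent g + phi p (Polynomial.aeval (X 1) h) =
      LaurentPolynomial.C u := by
    have h1 := phi_ker p hmem
    rw [map_sub, map_add, sub_eq_zero, hf] at h1
    rw [← phi_aeval_X0 p g, ← h1]
  have hCu : (LaurentPolynomial.C u : LaurentPolynomial R) = AddMonoidAlgebra.single (0 : ℤ) u := rfl
  have hg : ∀ k : ℕ, 0 < k → g.coeff k = 0 := by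
    intro k hk
    have h1 : (Polynomial.toLaurent g + phi p (Polynomial.aeval (X 1) h)).coeff (k : ℤ) =
        (LaurentPolynomial.C u : LaurentPolynomial R).coeff (k : ℤ) := by rw [hphi]
    rw [AddMonoidAlgebra.coeff_add, Finsupp.add_apply, tl_nonneg, tau_pos p h k hk, add_zero, hCu,
      AddMonoidAlgebra.coeff_single, Finsupp.single_apply, if_neg (by omega)] at h1
    exact h1
  have hh : h = 0 := by
    ext k
    rcases Nat.eq_zero_or_pos k with hk | hk
    · rw [hk, h0, Polynomial.coeff_zero]
    · have h1 : (Polynomial.toLaurent g + phi p (Polynomial.aeval (X 1) h)).coeff (-(k : ℤ)) =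
          (LaurentPolynomial.C u : LaurentPolynomial R).coeff (-(k : ℤ)) := by rw [hphi]
      rw [AddMonoidAlgebra.coeff_add, Finsupp.add_apply, tl_neg g k hk, tau_neg, zero_add, hCu,
        AddMonoidAlgebra.coeff_single, Finsupp.single_apply, if_neg (by omega)] at h1
      rw [Polynomial.coeff_zero]
      exact (mul_eq_zero.mp h1).resolve_right (pow_ne_zero _ hp0)
  have hg0 : g.coeff 0 = u := by
    have h1 : (Polynomial.toLaurent g + phi p (Polynomial.aeval (X 1) h)).coeff (((0:ℕ) : ℤ)) =
        (LaurentPolynomial.C u : LaurentPolynomial R).coeff (((0:ℕ) : ℤ)) := by rw [hphi]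
    have e2 : (phi p (Polynomial.aeval (X 1) h)).coeff (((0:ℕ) : ℤ)) = h.coeff 0 * p ^ 0 := by
      have := tau_neg p h 0
      simpa using this
    rw [AddMonoidAlgebra.coeff_add, Finsupp.add_apply, tl_nonneg, e2, h0, zero_mul, add_zero, hCu,
      AddMonoidAlgebra.coeff_single, Finsupp.single_apply, if_pos (by norm_num)] at h1
    exact h1
  have hgC : g = Polynomial.C u := by
    ext k
    rcases Nat.eq_zero_or_pos k with hk | hk
    · rw [hk, hg0, Polynomial.coeff_C_zero]
    · rw [hg k hk, Polynomial.coeff_C, if_neg (by omega)]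
  rw [hnf, hh, hgC]
  have : Polynomial.aeval (X 0 : MvPolynomial (Fin 2) R) (Polynomial.C u) =
      MvPolynomial.C u := by
    rw [Polynomial.aeval_C, MvPolynomial.algebraMap_eq]
  rw [this]
  simp

end Stmt14Aux

/-- If `R` is a UFD, `p` prime, and `a, b` are elements of
`R' = R[x,y]/(xy - p)` with `a * b = 1`, then `a` and `b` are homogeneous of grade `0`,
i.e. they come from `R`. -/
theorem stmt14 (R : Type*) [CommRing R] [IsDomain R] [UniqueFactorizationMonoid R]
    (p : R) (hp : Prime p)
    (a b : MvPolynomial (Fin 2) R ⧸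
      Ideal.span {(X 0 * X 1 - C p : MvPolynomial (Fin 2) R)})
    (hab : a * b = 1) :
    ∃ r r' : R,
      a = (Ideal.Quotient.mk (Ideal.span {(X 0 * X 1 - C p : MvPolynomial (Fin 2) R)})) (C r) ∧
      b = (Ideal.Quotient.mk (Ideal.span {(X 0 * X 1 - C p : MvPolynomial (Fin 2) R)})) (C r')
      := by
  obtain ⟨fa, rfl⟩ := Ideal.Quotient.mk_surjective a
  obtain ⟨fb, rfl⟩ := Ideal.Quotient.mk_surjective b
  have hmem : fa * fb - 1 ∈ Stmt14Aux.Ip p := by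
    rw [← Ideal.Quotient.eq]
    rw [map_mul]
    calc Ideal.Quotient.mk (Stmt14Aux.Ip p) fa * Ideal.Quotient.mk (Stmt14Aux.Ip p) fb
        = 1 := hab
      _ = Ideal.Quotient.mk (Stmt14Aux.Ip p) 1 := (map_one _).symm
  have hphi : Stmt14Aux.phi p fa * Stmt14Aux.phi p fb = 1 := by
    have h1 := Stmt14Aux.phi_ker p hmem
    rw [map_sub, map_mul, map_one, sub_eq_zero] at h1
    exact h1
  obtain ⟨u, hu⟩ := Stmt14Aux.grade_zero p hp hphi
  obtain ⟨v, hv⟩ := Stmt14Aux.grade_zero p hp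
    (show Stmt14Aux.phi p fb * Stmt14Aux.phi p fa = 1 by rw [mul_comm]; exact hphi)
  exact ⟨u, v, Stmt14Aux.eq_C_of_phi_eq_C p hp.ne_zero hu,
    Stmt14Aux.eq_C_of_phi_eq_C p hp.ne_zero hv⟩
end

section
/- Let R be a UFD, and let a, b ∈ R be nonzero with gcd(a,b) = 1. Then in the polynomial ring R[u], the linear polynomial a - u·b is a prime element. -/
open Polynomial

/-- If `R` is a UFD and `a, b ∈ R` are nonzero with `gcd(a,b) = 1` (every common
divisor is a unit), then `a - u·b` is a prime element of the polynomial ring `R[u]`. -/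
theorem stmt15 (R : Type*) [CommRing R] [IsDomain R] [UniqueFactorizationMonoid R]
    (a b : R) (ha : a ≠ 0) (hb : b ≠ 0)
    (hgcd : ∀ d : R, d ∣ a → d ∣ b → IsUnit d) :
    Prime (Polynomial.C a - Polynomial.X * Polynomial.C b) := by
  set p : R[X] := Polynomial.C a - Polynomial.X * Polynomial.C b with hp
  have hc0 : p.coeff 0 = a := by simp [hp]
  have hc1 : p.coeff 1 = -b := by simp [hp]
  have hprim : p.IsPrimitive := by
    intro r hr
    rw [Polynomial.C_dvd_iff_dvd_coeff] at hr
    exact hgcd r (hc0 ▸ hr 0) (dvd_neg.mp (hc1 ▸ hr 1))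
  rw [← UniqueFactorizationMonoid.irreducible_iff_prime]
  apply hprim.irreducible_of_irreducible_map_of_injective
    (IsFractionRing.injective R (FractionRing R))
  apply Polynomial.irreducible_of_degree_eq_one
  have hbne : (algebraMap R (FractionRing R)) b ≠ 0 := fun h =>
    hb (IsFractionRing.injective R (FractionRing R) (by simpa using h))
  rw [hp]
  simp only [Polynomial.map_sub, Polynomial.map_mul, Polynomial.map_C, Polynomial.map_X]
  rw [sub_eq_add_neg, neg_mul_eq_mul_neg, mul_comm, ← Polynomial.C_neg]
  rw [Polynomial.degree_add_eq_right_of_degree_lt]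
  · simpa using Polynomial.degree_C_mul_X (neg_ne_zero.mpr hbne)
  · calc (Polynomial.C ((algebraMap R (FractionRing R)) a)).degree ≤ 0 :=
        Polynomial.degree_C_le
      _ < _ := by
        rw [Polynomial.degree_C_mul_X (neg_ne_zero.mpr hbne)]; norm_num
end

section
/- Let R be a UFD. Define φ : R \ {0} → ℕ by φ(u·∏_{i=1}^k p_i^{α_i}) = ∑_{i=1}^k α_i², where u is a unit and p_1,…,p_k are pairwise nonassociate primes. Then φ is well defined, φ is invariant under multiplication by units, and φ(ab) > φ(b) whenever a is a nonzero nonunit and b ≠ 0. -/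
/-- In a UFD `R` there is a well-defined function `φ` on nonzero elements with
`φ(u·∏ pᵢ^{αᵢ}) = ∑ αᵢ²` for a unit `u` and pairwise nonassociate primes `pᵢ`; it is
invariant under multiplication by units, and `φ(ab) > φ(b)` whenever `a` is a nonzero
nonunit and `b ≠ 0`. -/
theorem stmt16 (R : Type*) [CommRing R] [IsDomain R] [UniqueFactorizationMonoid R] :
    ∃ φ : R → ℕ,
      (∀ (u : R), IsUnit u → ∀ (k : ℕ) (p : Fin k → R) (α : Fin k → ℕ),
        (∀ i, Prime (p i)) → (∀ i j, i ≠ j → ¬ Associated (p i) (p j)) →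
        φ (u * ∏ i, p i ^ α i) = ∑ i, (α i) ^ 2) ∧
      (∀ (u a : R), IsUnit u → a ≠ 0 → φ (u * a) = φ a) ∧
      (∀ a b : R, a ≠ 0 → ¬ IsUnit a → b ≠ 0 → φ b < φ (a * b)) := by
  classical
  letI : NormalizationMonoid R := (UniqueFactorizationMonoid.normalizationMonoid (α := R)).toNormalizationMonoid
  open UniqueFactorizationMonoid in
  refine ⟨fun x => ∑ q ∈ (normalizedFactors x).toFinset, ((normalizedFactors x).count q) ^ 2,
    ?_, ?_, ?_⟩
  · -- the formula
    intro u hu k p α hp hass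
    have hnfu : ∀ x : R, normalizedFactors (u * x) = normalizedFactors x := by
      intro x
      obtain ⟨v, rfl⟩ := hu
      exact (Associated.symm ⟨v, mul_comm x v⟩).normalizedFactors_eq
    set f : Fin k → R := fun i => normalize (p i) with hf
    have hinj : Function.Injective f := by
      intro i j h
      by_contra hij
      exact hass i j hij (associated_of_dvd_dvd (normalize_eq_normalize_iff.1 h).1
        (normalize_eq_normalize_iff.1 h).2)
    have hprod : (∏ i, p i ^ α i) = (∑ i, Multiset.replicate (α i) (p i)).prod := by
      rw [Multiset.prod_sum]
      simp [Multiset.prod_replicate]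
    have hM : normalizedFactors (u * ∏ i, p i ^ α i)
        = ∑ i, Multiset.replicate (α i) (f i) := by
      rw [hnfu, hprod, UniqueFactorizationMonoid.normalizedFactors_prod_eq]
      · rw [show Multiset.map (normalize : R → R) = ⇑(Multiset.mapAddMonoidHom (normalize : R → R)) from (Multiset.coe_mapAddMonoidHom _).symm, map_sum]
        congr 1
        ext i : 1
        simp [Multiset.map_replicate, hf]
      · intro a ha
        simp only [Multiset.mem_sum, Multiset.mem_replicate] at ha
        obtain ⟨i, -, -, rfl⟩ := ha
        exact (hp i).irreducible
    set M : Multiset R := ∑ i, Multiset.replicate (α i) (f i) with hMdef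
    show ∑ q ∈ (normalizedFactors (u * ∏ i, p i ^ α i)).toFinset,
        ((normalizedFactors (u * ∏ i, p i ^ α i)).count q) ^ 2 = ∑ i, α i ^ 2
    rw [hM]
    have hcount : ∀ j, M.count (f j) = α j := by
      intro j
      rw [hMdef, Multiset.count_sum']
      rw [Finset.sum_eq_single j]
      · simp [Multiset.count_replicate]
      · intro i _ hij
        rw [Multiset.count_replicate, if_neg (fun h => hij (hinj h))]
      · simp
    have hsub : M.toFinset ⊆ Finset.image f Finset.univ := by
      intro x hx
      simp only [Multiset.mem_toFinset, hMdef, Multiset.mem_sum, Multiset.mem_replicate] at hx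
      obtain ⟨i, -, -, rfl⟩ := hx
      exact Finset.mem_image_of_mem f (Finset.mem_univ i)
    calc (∑ q ∈ M.toFinset, (M.count q) ^ 2)
        = ∑ q ∈ Finset.image f Finset.univ, (M.count q) ^ 2 := by
          refine Finset.sum_subset hsub ?_
          intro x _ hx
          simp only [Multiset.mem_toFinset] at hx
          simp [Multiset.count_eq_zero_of_notMem hx]
      _ = ∑ i, (M.count (f i)) ^ 2 :=
          Finset.sum_image (fun i _ j _ h => hinj h)
      _ = ∑ i, α i ^ 2 := by simp [hcount]
  · -- unit invariance
    intro u a hu _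
    obtain ⟨v, rfl⟩ := hu
    show ∑ q ∈ (normalizedFactors ((v : R) * a)).toFinset,
        ((normalizedFactors ((v : R) * a)).count q) ^ 2
      = ∑ q ∈ (normalizedFactors a).toFinset, ((normalizedFactors a).count q) ^ 2
    rw [(Associated.symm ⟨v, mul_comm a v⟩).normalizedFactors_eq]
  · -- strict increase
    intro a b ha hau hb
    have hlt : ∀ m n : Multiset R, m ≠ 0 →
        (∑ q ∈ n.toFinset, (n.count q) ^ 2) < ∑ q ∈ (m + n).toFinset, ((m + n).count q) ^ 2 := by
      intro m n hm
      obtain ⟨q, hq⟩ := Multiset.exists_mem_of_ne_zero hm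
      have hsub : n.toFinset ⊆ (m + n).toFinset := by
        intro x hx
        simp only [Multiset.mem_toFinset, Multiset.mem_add] at *
        exact Or.inr hx
      have h1 : (∑ q ∈ n.toFinset, (n.count q) ^ 2)
          = ∑ x ∈ (m + n).toFinset, (n.count x) ^ 2 := by
        refine Finset.sum_subset hsub ?_
        intro x _ hx
        simp only [Multiset.mem_toFinset] at hx
        simp [Multiset.count_eq_zero_of_notMem hx]
      rw [h1]
      apply Finset.sum_lt_sum
      · intro i _
        exact Nat.pow_le_pow_left (by simp [Multiset.count_add]) 2
      · refine ⟨q, ?_, ?_⟩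
        · simp only [Multiset.mem_toFinset, Multiset.mem_add]
          exact Or.inl hq
        · have hcq : 1 ≤ m.count q := Multiset.one_le_count_iff_mem.2 hq
          have hc : n.count q < (m + n).count q := by
            rw [Multiset.count_add]; omega
          exact Nat.pow_lt_pow_left hc (by norm_num)
    show (∑ q ∈ (normalizedFactors b).toFinset, ((normalizedFactors b).count q) ^ 2)
      < ∑ q ∈ (normalizedFactors (a * b)).toFinset, ((normalizedFactors (a * b)).count q) ^ 2
    rw [UniqueFactorizationMonoid.normalizedFactors_mul ha hb]
    apply hlt
    obtain ⟨q, hq⟩ := UniqueFactorizationMonoid.exists_mem_normalizedFactors ha hau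
    exact fun h => by simp [h] at hq
end

section
/- Let R be a UFD, S a multiplicatively closed set of R generated by units and a set U of prime elements of R. Then the localization S⁻¹R is a UFD, and the prime elements of S⁻¹R are exactly the associates (in S⁻¹R) of those primes of R that are not associate to any element of U. -/
/-!
A prime `q` of `R` stays prime in any localization in which it does not become a unit; conversely,
a prime of a localization is associated to the image of some `r`, and `r` factors as an element
that becomes a unit times an irreducible, hence prime, element of `R`. A prime `q` becomes a unit
in `S⁻¹R` exactly when it divides an element of `S`, a product of units and elements of `U`,
which happens only when `q` is associated to an element of `U`. Unique factorization passes to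
every localization.
-/

namespace Submonoid.LocalizationMap

variable {M N : Type*} [CommMonoidWithZero M] [CommMonoidWithZero N] {S : Submonoid M}

theorem exists_prime_associated_map_of_prime [UniqueFactorizationMonoid M]
    (f : S.LocalizationMap N) {n : N} (hn : Prime n) :
    ∃ q : M, Prime q ∧ ¬IsUnit (f q) ∧ Associated (f q) n := by
  have := f.isCancelMulZero
  obtain ⟨⟨r, s⟩, hrs⟩ := f.surj n
  have hnr : Associated n (f r) := ⟨(f.map_units s).unit, hrs⟩
  obtain ⟨u, q, hu, hq, rfl⟩ :=
    f.eq_isUnit_map_mul_irreducible_of_irreducible_map (hnr.prime hn).irreducible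
  rw [map_mul] at hnr
  have hqn : Associated (f q) n := (associated_unit_mul_left _ _ hu).symm.trans hnr.symm
  exact ⟨q, UniqueFactorizationMonoid.irreducible_iff_prime.mp hq,
    fun h ↦ hn.not_isUnit (hqn.isUnit h), hqn⟩

theorem prime_iff_exists_prime_associated_map [UniqueFactorizationMonoid M]
    (f : S.LocalizationMap N) (hf : Function.Injective f) {n : N} :
    Prime n ↔ ∃ q : M, Prime q ∧ ¬IsUnit (f q) ∧ Associated (f q) n := by
  refine ⟨f.exists_prime_associated_map_of_prime, fun ⟨q, hq, hqu, hqn⟩ ↦ hqn.prime ?_⟩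
  exact f.map_prime hq (fun h ↦ hq.ne_zero (hf (h.trans (map_zero f).symm))) hqu

end Submonoid.LocalizationMap

section ClosureOfPrimes

variable {M N : Type*} [CommMonoidWithZero M] [IsCancelMulZero M] [CommMonoidWithZero N]
  {U : Set M}

theorem Prime.exists_associated_of_dvd_mem_closure (hU : ∀ u ∈ U, Prime u) {q : M}
    (hq : Prime q) {s : M} (hs : s ∈ Submonoid.closure (U ∪ {u | IsUnit u})) (hqs : q ∣ s) :
    ∃ u ∈ U, Associated q u := by
  induction hs using Submonoid.closure_induction with
  | mem x hx =>
    rcases hx with hxU | hxunit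
    · exact ⟨x, hxU, hq.associated_of_dvd (hU x hxU) hqs⟩
    · exact (hq.not_isUnit (isUnit_of_dvd_unit hqs hxunit)).elim
  | one => exact (hq.not_isUnit (isUnit_of_dvd_one hqs)).elim
  | mul a b _ _ ha hb => exact (hq.dvd_or_dvd hqs).elim ha hb

theorem Submonoid.LocalizationMap.isUnit_map_prime_iff
    (f : (Submonoid.closure (U ∪ {u | IsUnit u})).LocalizationMap N)
    (hU : ∀ u ∈ U, Prime u) {q : M} (hq : Prime q) :
    IsUnit (f q) ↔ ∃ u ∈ U, Associated q u := by
  rw [f.map_isUnit_iff]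
  exact ⟨fun ⟨_, hs, hqs⟩ ↦ hq.exists_associated_of_dvd_mem_closure hU hs hqs,
    fun ⟨u, hu, hqu⟩ ↦ ⟨u, Submonoid.subset_closure (Or.inl hu), hqu.dvd⟩⟩

end ClosureOfPrimes

/-- If `R` is a UFD and `S` is the multiplicative set generated by the units of
`R` together with a set `U` of prime elements, then `S⁻¹R` is a UFD, and its primes are
exactly the associates (in `S⁻¹R`) of the primes of `R` not associate to any element of `U`. -/
theorem stmt19 (R : Type*) [CommRing R] [IsDomain R] [UniqueFactorizationMonoid R]
    (U : Set R) (hU : ∀ q ∈ U, Prime q) :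
    ∃ hD : IsDomain (Localization (Submonoid.closure (U ∪ {u : R | IsUnit u}))),
      UniqueFactorizationMonoid (Localization (Submonoid.closure (U ∪ {u : R | IsUnit u}))) ∧
      ∀ a : Localization (Submonoid.closure (U ∪ {u : R | IsUnit u})),
        Prime a ↔ ∃ q : R, Prime q ∧ (∀ u ∈ U, ¬ Associated q u) ∧
          Associated (algebraMap R (Localization (Submonoid.closure (U ∪ {u : R | IsUnit u}))) q)
            a := by
  set S := Submonoid.closure (U ∪ {u : R | IsUnit u})
  have hS : S ≤ nonZeroDivisors R := by
    refine Submonoid.closure_le.mpr ?_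
    rintro x (hxU | hxunit)
    · exact mem_nonZeroDivisors_of_ne_zero (hU x hxU).ne_zero
    · exact mem_nonZeroDivisors_of_ne_zero hxunit.ne_zero
  let f := IsLocalization.toLocalizationMap S (Localization S)
  refine ⟨IsLocalization.isDomain_localization hS, inferInstance, fun a ↦ ?_⟩
  rw [f.prime_iff_exists_prime_associated_map (IsLocalization.injective _ hS)]
  refine exists_congr fun q ↦ and_congr_right fun hq ↦ ?_
  simp only [f.isUnit_map_prime_iff hU hq, not_exists, not_and]
  rfl
end
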